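/- arXiv:0911.5458 — 3 statements merged into one kernel-verified Lean document; each statement's English description precedes it below -/
import Mathlib

section
/- For every positive integer N, every nonempty subset A ⊆ [N], and every real number δ with 1 ≤ δ ≤ (N−1)/|A|, the block structure of A with respect to δ on the circular representation of [N] exists and is unique. -/
/-- The point of the circular representation of `[N] = {1, …, N}` reached from the
point `x` after `t` clockwise steps. -/
def cpt (N x t : ℕ) : ℕ := (x - 1 + t) % N + 1

/-- The block of `len` clockwise-consecutive points of the circular representation
of `[N]` starting at the point `x`. -/
def cblock (N x len : ℕ) : Finset ℕ := (Finset.range len).image (cpt N x)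

/-- Data describing a candidate block structure on the circular representation of a
set `[N]`: the number `p` of blocks, the first (clockwise) element `b i` of the `i`-th
block `B i`, the length `lenB i` of `B i`, and the length `lenG i` of the gap `G i`
following `B i` clockwise (only the indices `i < p` are relevant). -/
structure CircData where
  p : ℕ
  b : ℕ → ℕ
  lenB : ℕ → ℕ
  lenG : ℕ → ℕ

/-- The `i`-th block `B i` of the data `S` on the circular representation of `[N]`. -/
def CircData.Blk (S : CircData) (N i : ℕ) : Finset ℕ := cblock N (S.b i) (S.lenB i)

/-- The `i`-th gap `G i` of the data `S`, which follows the block `B i` clockwise. -/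
def CircData.Gap (S : CircData) (N i : ℕ) : Finset ℕ :=
  cblock N (cpt N (S.b i) (S.lenB i)) (S.lenG i)

/-- `S` describes the block structure `B_1, G_1, B_2, G_2, …, B_p, G_p` of the set `A`
with respect to the density `δ` on the circular representation of `[N]`. -/
def IsBlockStructure (N : ℕ) (A : Finset ℕ) (δ : ℝ) (S : CircData) : Prop :=
  0 < S.p ∧
  -- each block is nonempty (it contains its first element `b i`)
  (∀ i < S.p, 0 < S.lenB i) ∧
  -- the blocks and gaps are arranged consecutively clockwise, cyclically
  (∀ i, i + 1 < S.p → S.b (i + 1) = cpt N (S.b i) (S.lenB i + S.lenG i)) ∧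
  S.b 0 = cpt N (S.b (S.p - 1)) (S.lenB (S.p - 1) + S.lenG (S.p - 1)) ∧
  -- the blocks and gaps form a partition of `[N]`
  ((Finset.range S.p).biUnion (fun i => S.Blk N i ∪ S.Gap N i) = Finset.Icc 1 N) ∧
  (∀ i < S.p, ∀ j < S.p, i ≠ j →
    Disjoint (S.Blk N i ∪ S.Gap N i) (S.Blk N j ∪ S.Gap N j)) ∧
  (∀ i < S.p, Disjoint (S.Blk N i) (S.Gap N i)) ∧
  -- (i) the first (clockwise) element of each block belongs to `A`
  (∀ i < S.p, S.b i ∈ A) ∧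
  -- (ii) the gaps are disjoint from `A`
  (∀ i < S.p, ∀ x ∈ S.Gap N i, x ∉ A) ∧
  -- (iii) `δ·|A ∩ B i| − 1 < |B i| ≤ δ·|A ∩ B i|`
  (∀ i < S.p, δ * ((A ∩ S.Blk N i).card : ℝ) - 1 < ((S.Blk N i).card : ℝ) ∧
    ((S.Blk N i).card : ℝ) ≤ δ * ((A ∩ S.Blk N i).card : ℝ)) ∧
  -- (iv) every proper initial segment `[b i, y] ⊊ B i` satisfies
  -- `|[b i, y]| + 1 ≤ δ·|[b i, y] ∩ A|`
  (∀ i < S.p, ∀ t, 0 < t → t < S.lenB i →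
    ((cblock N (S.b i) t).card : ℝ) + 1 ≤ δ * ((cblock N (S.b i) t ∩ A).card : ℝ))

/-- The union `𝒢_δ(A) = G_1 ∪ ⋯ ∪ G_p` of the gaps of the block structure `S`. -/
def CircData.gapsUnion (S : CircData) (N : ℕ) : Finset ℕ :=
  (Finset.range S.p).biUnion (S.Gap N)

/-- `f_δ(A) = A ∪ 𝒢_δ(A)`, computed from the block structure `S` of `A` on `[N]`. -/
def fdelta (A : Finset ℕ) (S : CircData) (N : ℕ) : Finset ℕ := A ∪ S.gapsUnion N


def arcCnt (N : ℕ) (A : Finset ℕ) (x0 t : ℕ) : ℕ :=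
  ((Finset.range t).filter (fun j => cpt N x0 j ∈ A)).card

section Base
variable {N : ℕ} (hN : 0 < N)

include hN in
lemma cpt_mem_Icc (x t : ℕ) : cpt N x t ∈ Finset.Icc 1 N := by
  simp only [cpt, Finset.mem_Icc]
  have := Nat.mod_lt (x - 1 + t) hN
  omega

lemma cpt_add (x s t : ℕ) : cpt N (cpt N x s) t = cpt N x (s + t) := by
  simp only [cpt]
  rw [Nat.add_sub_cancel, Nat.mod_add_mod, add_assoc]

lemma cpt_congr {t1 t2 : ℕ} (x : ℕ) (h : t1 % N = t2 % N) : cpt N x t1 = cpt N x t2 := by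
  simp only [cpt]
  rw [Nat.add_mod, h, ← Nat.add_mod]

lemma cpt_mod (x t : ℕ) : cpt N x (t % N) = cpt N x t :=
  cpt_congr x (Nat.mod_mod_of_dvd t dvd_rfl)

lemma cpt_zero {x : ℕ} (h1 : 1 ≤ x) (h2 : x ≤ N) : cpt N x 0 = x := by
  simp only [cpt, add_zero]
  rw [Nat.mod_eq_of_lt (by omega)]
  omega

lemma cpt_period (x t : ℕ) : cpt N x (t + N) = cpt N x t :=
  cpt_congr x (by simp [Nat.add_mod])

omit hN in
include hN in
lemma cpt_inj {t1 t2 : ℕ} (x : ℕ) (h1 : t1 < N) (h2 : t2 < N) (h : cpt N x t1 = cpt N x t2) :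
    t1 = t2 := by
  simp only [cpt, add_left_inj] at h
  have h2' : t1 % N = t2 % N := Nat.ModEq.add_left_cancel' (x - 1) h
  rw [Nat.mod_eq_of_lt h1, Nat.mod_eq_of_lt h2] at h2'
  exact h2'

include hN in
lemma cpt_right_cancel {x y u : ℕ} (hx1 : 1 ≤ x) (hx2 : x ≤ N) (hy1 : 1 ≤ y) (hy2 : y ≤ N)
    (h : cpt N x u = cpt N y u) : x = y := by
  simp only [cpt, add_left_inj] at h
  have h' : (x - 1) % N = (y - 1) % N := Nat.ModEq.add_right_cancel' u h
  rw [Nat.mod_eq_of_lt (by omega), Nat.mod_eq_of_lt (by omega)] at h'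
  omega

include hN in
lemma cpt_surj (x y : ℕ) (hy1 : 1 ≤ y) (hy2 : y ≤ N) : ∃ t, t < N ∧ cpt N x t = y := by
  have hr : (x - 1) % N < N := Nat.mod_lt _ hN
  set r := (x - 1) % N with hrdef
  refine ⟨if r < y then y - 1 - r else y + N - 1 - r, by split <;> omega, ?_⟩
  have key : ∀ t : ℕ, (x - 1 + t) % N = (r + t) % N := by
    intro t
    rw [Nat.add_mod, Nat.add_mod_mod]
  simp only [cpt, key]
  split
  · rw [show r + (y - 1 - r) = y - 1 by omega, Nat.mod_eq_of_lt (by omega)]; omega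
  · rw [show r + (y + N - 1 - r) = (y - 1) + N by omega, Nat.add_mod_right,
      Nat.mod_eq_of_lt (by omega)]; omega

lemma mem_cblock {N x len y : ℕ} : y ∈ cblock N x len ↔ ∃ t, t < len ∧ cpt N x t = y := by
  simp [cblock, Finset.mem_image, Finset.mem_range]

include hN in
lemma cblock_subset_Icc (x len : ℕ) : cblock N x len ⊆ Finset.Icc 1 N := by
  intro y hy
  rw [mem_cblock] at hy
  obtain ⟨t, _, rfl⟩ := hy
  exact cpt_mem_Icc hN x t

include hN in
lemma cblock_card_of_le {x len : ℕ} (h : len ≤ N) : (cblock N x len).card = len := by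
  rw [cblock, Finset.card_image_of_injOn, Finset.card_range]
  intro t1 h1 t2 h2 he
  simp only [Finset.coe_range, Set.mem_Iio] at h1 h2
  exact cpt_inj hN x (lt_of_lt_of_le h1 h) (lt_of_lt_of_le h2 h) he

include hN in
lemma cblock_of_ge {x len : ℕ} (h : N ≤ len) : cblock N x len = cblock N x N := by
  ext y
  simp only [mem_cblock]
  constructor
  · rintro ⟨t, ht, rfl⟩
    exact ⟨t % N, Nat.mod_lt _ hN, cpt_mod x t⟩
  · rintro ⟨t, ht, rfl⟩
    exact ⟨t, lt_of_lt_of_le ht h, rfl⟩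

include hN in
lemma cblock_card (x len : ℕ) : (cblock N x len).card = min len N := by
  rcases le_total len N with h | h
  · rw [cblock_card_of_le hN h, min_eq_left h]
  · rw [cblock_of_ge hN h, cblock_card_of_le hN le_rfl, min_eq_right h]

lemma cblock_union (x l1 l2 : ℕ) :
    cblock N x (l1 + l2) = cblock N x l1 ∪ cblock N (cpt N x l1) l2 := by
  ext y
  simp only [Finset.mem_union, mem_cblock]
  constructor
  · rintro ⟨t, ht, rfl⟩
    rcases lt_or_ge t l1 with h | h
    · exact Or.inl ⟨t, h, rfl⟩
    · exact Or.inr ⟨t - l1, by omega, by rw [cpt_add]; congr 1; omega⟩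
  · rintro (⟨t, ht, rfl⟩ | ⟨t, ht, rfl⟩)
    · exact ⟨t, by omega, rfl⟩
    · exact ⟨l1 + t, by omega, by rw [cpt_add]⟩
end Base

section Cnt
set_option linter.unusedSectionVars false
variable {N : ℕ} (hN : 0 < N) {A : Finset ℕ}

lemma arcCnt_mono (x0 : ℕ) {t1 t2 : ℕ} (h : t1 ≤ t2) : arcCnt N A x0 t1 ≤ arcCnt N A x0 t2 :=
  Finset.card_le_card (Finset.filter_subset_filter _ (Finset.range_subset_range.2 h))

lemma arcCnt_zero (x0 : ℕ) : arcCnt N A x0 0 = 0 := by simp [arcCnt]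

lemma arcCnt_succ (x0 t : ℕ) :
    arcCnt N A x0 (t + 1) = arcCnt N A x0 t + (if cpt N x0 t ∈ A then 1 else 0) := by
  unfold arcCnt
  rw [Finset.range_add_one, Finset.filter_insert]
  split
  · rw [Finset.card_insert_of_notMem (by simp)]
  · simp

include hN in
lemma cpt_inj_window {x0 u t1 t2 : ℕ} (h1 : u ≤ t1) (h1' : t1 < u + N) (h2 : u ≤ t2)
    (h2' : t2 < u + N) (he : cpt N x0 t1 = cpt N x0 t2) : t1 = t2 := by
  simp only [cpt, add_left_inj] at he
  have hme : t1 ≡ t2 [MOD N] := Nat.ModEq.add_left_cancel' (x0 - 1) he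
  rcases le_total t1 t2 with h | h
  · rcases (Nat.modEq_iff_dvd' h).mp hme with ⟨k, hk⟩
    match k, hk with
    | 0, hk => omega
    | (k+1), hk => rw [Nat.mul_succ] at hk; omega
  · rcases (Nat.modEq_iff_dvd' h).mp hme.symm with ⟨k, hk⟩
    match k, hk with
    | 0, hk => omega
    | (k+1), hk => rw [Nat.mul_succ] at hk; omega

lemma cblock_eq_image_Ico (x0 u l : ℕ) :
    cblock N (cpt N x0 u) l = (Finset.Ico u (u + l)).image (cpt N x0) := by
  ext y
  simp only [mem_cblock, Finset.mem_image, Finset.mem_Ico]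
  constructor
  · rintro ⟨t, ht, rfl⟩
    exact ⟨u + t, ⟨by omega, by omega⟩, (cpt_add x0 u t).symm⟩
  · rintro ⟨s, ⟨hs1, hs2⟩, rfl⟩
    exact ⟨s - u, by omega, by rw [cpt_add]; congr 1; omega⟩

lemma arcCnt_split (x0 u l : ℕ) :
    arcCnt N A x0 (u + l)
      = arcCnt N A x0 u + ((Finset.Ico u (u + l)).filter (fun j => cpt N x0 j ∈ A)).card := by
  rw [arcCnt, arcCnt, Finset.range_eq_Ico,
    ← Finset.Ico_union_Ico_eq_Ico (Nat.zero_le u) (Nat.le_add_right u l),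
    Finset.filter_union, Finset.card_union_of_disjoint, ← Finset.range_eq_Ico]
  exact Finset.disjoint_filter_filter (Finset.Ico_disjoint_Ico_consecutive 0 u (u + l))

include hN in
lemma count_arc (x0 : ℕ) {u l : ℕ} (h : u + l ≤ N) :
    (cblock N (cpt N x0 u) l ∩ A).card + arcCnt N A x0 u = arcCnt N A x0 (u + l) := by
  have himg : cblock N (cpt N x0 u) l ∩ A
      = ((Finset.Ico u (u + l)).filter (fun j => cpt N x0 j ∈ A)).image (cpt N x0) := by
    rw [cblock_eq_image_Ico]
    ext y
    simp only [Finset.mem_inter, Finset.mem_image, Finset.mem_filter]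
    constructor
    · rintro ⟨⟨s, hs, rfl⟩, hy⟩; exact ⟨s, ⟨hs, hy⟩, rfl⟩
    · rintro ⟨s, ⟨hs, hy⟩, rfl⟩; exact ⟨⟨s, hs, rfl⟩, hy⟩
  rw [himg, Finset.card_image_of_injOn, arcCnt_split x0 u l, add_comm]
  intro t1 h1 t2 h2 he
  simp only [Finset.coe_filter, Set.mem_setOf_eq, Finset.mem_Ico] at h1 h2
  exact cpt_inj hN x0 (by omega) (by omega) he

include hN in
lemma window_count_le (x0 u : ℕ) : arcCnt N A x0 (u + N) ≤ arcCnt N A x0 u + A.card := by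
  rw [arcCnt_split x0 u N]
  have : ((Finset.Ico u (u + N)).filter (fun j => cpt N x0 j ∈ A)).card ≤ A.card := by
    apply Finset.card_le_card_of_injOn (cpt N x0)
    · intro t ht
      exact (Finset.mem_filter.mp ht).2
    · intro t1 h1 t2 h2 he
      simp only [Finset.coe_filter, Set.mem_setOf_eq, Finset.mem_Ico] at h1 h2
      exact cpt_inj_window hN h1.1.1 h1.1.2 h2.1.1 h2.1.2 he
  omega

end Cnt

section Origin
set_option linter.unusedSectionVars false
variable {N : ℕ} (hN : 0 < N) {A : Finset ℕ} {δ : ℝ}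

include hN in
lemma full_period_count (hA : A ⊆ Finset.Icc 1 N) (y : ℕ) : arcCnt N A y N = A.card := by
  unfold arcCnt
  apply Finset.card_bij (fun j _ => cpt N y j)
  · intro j hj
    exact (Finset.mem_filter.mp hj).2
  · intro t1 h1 t2 h2 he
    simp only [Finset.mem_filter, Finset.mem_range] at h1 h2
    exact cpt_inj hN y h1.1 h2.1 he
  · intro a ha
    obtain ⟨t, ht, hct⟩ := cpt_surj hN y a (Finset.mem_Icc.mp (hA ha)).1 (Finset.mem_Icc.mp (hA ha)).2
    exact ⟨t, Finset.mem_filter.mpr ⟨Finset.mem_range.mpr ht, hct.symm ▸ ha⟩, hct⟩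

lemma arcCnt_shift (x0 s t : ℕ) :
    arcCnt N A x0 (s + t) = arcCnt N A x0 s + arcCnt N A (cpt N x0 s) t := by
  rw [arcCnt_split x0 s t]
  congr 1
  apply Finset.card_bij (fun j _ => j - s)
  · intro j hj
    simp only [Finset.mem_filter, Finset.mem_Ico] at hj
    simp only [arcCnt, Finset.mem_filter, Finset.mem_range]
    refine ⟨by omega, ?_⟩
    rw [cpt_add]
    convert hj.2 using 2
    omega
  · intro t1 h1 t2 h2 he
    simp only [Finset.mem_filter, Finset.mem_Ico] at h1 h2
    omega
  · intro j hj
    simp only [arcCnt, Finset.mem_filter, Finset.mem_range] at hj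
    refine ⟨s + j, Finset.mem_filter.mpr ⟨Finset.mem_Ico.mpr ⟨by omega, by omega⟩, ?_⟩, by omega⟩
    rw [← cpt_add]
    exact hj.2

include hN in
lemma arcCnt_period (hA : A ⊆ Finset.Icc 1 N) (x0 t : ℕ) :
    arcCnt N A x0 (t + N) = arcCnt N A x0 t + A.card := by
  rw [arcCnt_shift x0 t N, full_period_count hN hA]

include hN in
lemma exists_good_origin (hA : A ⊆ Finset.Icc 1 N) (hAne : A.Nonempty)
    (hδ1 : 1 ≤ δ) (hcard : δ * (A.card : ℝ) ≤ (N : ℝ) - 1) :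
    ∃ a0, a0 ∈ A ∧
      ∀ t ≤ N, δ * (arcCnt N A a0 N : ℝ) - (N : ℝ) ≤ δ * (arcCnt N A a0 t : ℝ) - (t : ℝ) := by
  classical
  set H : ℕ → ℝ := fun n => δ * (arcCnt N A 1 n : ℝ) - n with hH
  have hHN : H N ≤ -1 := by
    have : (arcCnt N A 1 N : ℝ) = A.card := by rw [full_period_count hN hA]
    simp only [hH, this]
    linarith
  have hHper : ∀ n, H (n + N) = H n + H N := by
    intro n
    simp only [hH]
    rw [arcCnt_period hN hA, full_period_count hN hA]
    push_cast
    ring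
  have hstepN : ∀ n, cpt N 1 n ∉ A → H (n + 1) = H n - 1 := by
    intro n hn
    simp only [hH, arcCnt_succ, if_neg hn]
    push_cast
    ring
  have hstepA : ∀ n, cpt N 1 n ∈ A → H (n + 1) = H n + (δ - 1) := by
    intro n hn
    simp only [hH, arcCnt_succ, if_pos hn]
    push_cast
    ring
  -- minimizer of H over range N
  obtain ⟨m, hmmem, hmmin⟩ := Finset.exists_min_image (Finset.range N) H ⟨0, by simpa using hN⟩
  rw [Finset.mem_range] at hmmem
  replace hmmin : ∀ t, t < N → H m ≤ H t := fun t ht => hmmin t (Finset.mem_range.mpr ht)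
  -- the trailing-window property at m
  have good_m : ∀ t ≤ N, H (m + N) ≤ H (m + t) := by
    intro t ht
    rcases lt_or_ge (m + t) N with h | h
    · have h1 : H (m + N) = H m + H N := hHper m
      have h2 : H m ≤ H (m + t) := hmmin _ h
      linarith
    · have h1 : m + t = (m + t - N) + N := by omega
      have h2 : H (m + t) = H (m + t - N) + H N := by
        have h2' := hHper (m + t - N)
        rw [show m + t - N + N = m + t by omega] at h2'
        exact h2'
      have h3 : H (m + N) = H m + H N := hHper m
      have h4 : H (m + t - N) ≥ H m := by
        rcases eq_or_lt_of_le (show m + t - N ≤ m by omega) with he | hl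
        · rw [he]
        · exact hmmin _ (by omega)
      linarith
  -- walk forward to the next point of A
  have hexA : ∃ w, cpt N 1 (m + w) ∈ A := by
    obtain ⟨a, ha⟩ := hAne
    obtain ⟨t, ht, hct⟩ := cpt_surj hN 1 a (Finset.mem_Icc.mp (hA ha)).1 (Finset.mem_Icc.mp (hA ha)).2
    refine ⟨t + N - m % N, ?_⟩
    have : cpt N 1 (m + (t + N - m % N)) = cpt N 1 t := by
      apply cpt_congr
      have hm : m % N < N := Nat.mod_lt _ hN
      have hle := Nat.mod_le m N
      have hkey : m + (t + N - m % N) = (m - m % N) + t + N := by omega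
      rw [hkey]
      have hdvd : N ∣ m - m % N := by
        have := Nat.mod_add_div m N
        exact ⟨m / N, by omega⟩
      obtain ⟨q, hq⟩ := hdvd
      rw [hq]
      simp [Nat.add_mod, Nat.mul_mod_right]
    rw [this, hct]
    exact ha
  set w := Nat.find hexA with hwdef
  -- chain: the trailing-window property propagates to m + w
  have chain : ∀ t, t ≤ w → ∀ r ≤ N, H (m + t + N) ≤ H (m + t + r) := by
    intro t
    induction t with
    | zero => intro _ r hr; simpa using good_m r hr
    | succ t ih =>
      intro ht r hr
      have htw : t < w := by omega
      have hnotA : cpt N 1 (m + t) ∉ A := Nat.find_min hexA htw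
      have hnotA' : cpt N 1 (m + t + N) ∉ A := by
        rwa [cpt_period]
      have hstep1 : H (m + t + N + 1) = H (m + t + N) - 1 := hstepN _ hnotA'
      have ihh := ih (by omega)
      rcases Nat.eq_or_lt_of_le hr with he | hl
      · have : m + (t + 1) + N = m + (t + 1) + r := by omega
        rw [← this]
      · have h1 : H (m + t + N) ≤ H (m + t + (r + 1)) := ihh (r + 1) (by omega)
        have e1 : m + (t + 1) + N = m + t + N + 1 := by ring
        have e2 : m + (t + 1) + r = m + t + (r + 1) := by ring
        rw [e1, e2, hstep1]
        linarith
  refine ⟨cpt N 1 (m + w), Nat.find_spec hexA, ?_⟩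
  -- translate the conclusion
  intro t ht
  have htrans : ∀ u : ℕ, δ * (arcCnt N A (cpt N 1 (m + w)) u : ℝ) - u = H (m + w + u) - H (m + w) := by
    intro u
    simp only [hH]
    rw [arcCnt_shift 1 (m + w) u]
    push_cast
    ring
  rw [htrans t, htrans N]
  have := chain w le_rfl t ht
  have h2 := chain w le_rfl N le_rfl
  linarith [chain w le_rfl t ht]
end Origin

section Reach
set_option linter.unusedSectionVars false
variable {N : ℕ} (hN : 0 < N)

include hN in
lemma cpt_reach {y : ℕ} (x v : ℕ) (hy1 : 1 ≤ y) (hy2 : y ≤ N) : ∃ w, cpt N x (v + w) = y := by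
  obtain ⟨t, ht, hct⟩ := cpt_surj hN x y hy1 hy2
  refine ⟨t + N - v % N, ?_⟩
  have hm : v % N < N := Nat.mod_lt _ hN
  have hle := Nat.mod_le v N
  have : cpt N x (v + (t + N - v % N)) = cpt N x t := by
    apply cpt_congr
    have hkey : v + (t + N - v % N) = (v - v % N) + t + N := by omega
    rw [hkey]
    have hdvd : N ∣ v - v % N := by
      have := Nat.mod_add_div v N
      exact ⟨v / N, by omega⟩
    obtain ⟨q, hq⟩ := hdvd
    rw [hq]
    simp [Nat.add_mod, Nat.mul_mod_right]
  rw [this, hct]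
end Reach

section Exist
set_option linter.unusedSectionVars false
variable {N : ℕ} {A : Finset ℕ} {δ : ℝ}

lemma exists_block_structure (hN : 0 < N) (hA : A ⊆ Finset.Icc 1 N) (hAne : A.Nonempty)
    (hδ1 : 1 ≤ δ) (hcard : δ * (A.card : ℝ) ≤ (N : ℝ) - 1) :
    ∃ S : CircData, IsBlockStructure N A δ S := by
  classical
  obtain ⟨a0, ha0A, Ha⟩ := exists_good_origin hN hA hAne hδ1 hcard
  have ha0Icc := hA ha0A
  rw [Finset.mem_Icc] at ha0Icc
  set cnt : ℕ → ℕ := arcCnt N A a0 with hcntdef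
  set good : ℕ → ℕ → Prop :=
    fun u l => (l : ℝ) + 1 ≤ δ * ((cnt (u + l) : ℝ) - (cnt u : ℝ)) with hgooddef
  have hδ0 : (0:ℝ) ≤ δ := by linarith
  -- existence of block length
  have hLex : ∀ u, ∃ l, 0 < l ∧ ¬ good u l := by
    intro u
    refine ⟨N, hN, ?_⟩
    simp only [hgooddef]
    push_neg
    have h1 : cnt (u + N) ≤ cnt u + A.card := window_count_le hN a0 u
    have h2 : ((cnt (u + N) : ℝ) - cnt u) ≤ (A.card : ℝ) := by
      have : (cnt (u + N) : ℝ) ≤ (cnt u : ℝ) + A.card := by exact_mod_cast h1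
      linarith
    have h3 : δ * ((cnt (u + N) : ℝ) - cnt u) ≤ δ * A.card :=
      mul_le_mul_of_nonneg_left h2 hδ0
    have hN1 : (1:ℝ) ≤ N := by exact_mod_cast hN
    linarith
  set L : ℕ → ℕ := fun u => Nat.find (hLex u) with hLdef
  have hL1 : ∀ u, 0 < L u := fun u => (Nat.find_spec (hLex u)).1
  have hLng : ∀ u, ¬ good u (L u) := fun u => (Nat.find_spec (hLex u)).2
  have hLmin : ∀ u l, 0 < l → l < L u → good u l := by
    intro u l h1 h2
    by_contra hng
    exact absurd ⟨h1, hng⟩ (Nat.find_min (hLex u) h2)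
  have hLle : ∀ u, u < N → u + L u ≤ N := by
    intro u hu
    have : L u ≤ N - u := by
      apply Nat.find_le
      refine ⟨by omega, ?_⟩
      simp only [hgooddef]
      push_neg
      have hHa := Ha u (by omega)
      rw [show u + (N - u) = N by omega]
      have hc : ((N : ℝ) - u) + 1 > δ * ((cnt N : ℝ) - cnt u) := by
        simp only [hcntdef] at hHa ⊢
        linarith
      calc δ * ((cnt N : ℝ) - cnt u) < ((N:ℝ) - u) + 1 := hc
        _ = ((N - u : ℕ) : ℝ) + 1 := by rw [Nat.cast_sub (by omega)]
    omega
  -- gap lengths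
  have hWex : ∀ v, ∃ w, cpt N a0 (v + w) ∈ A := by
    intro v
    obtain ⟨w, hw⟩ := cpt_reach hN (y := a0) a0 v ha0Icc.1 ha0Icc.2
    exact ⟨w, by rw [hw]; exact ha0A⟩
  set W : ℕ → ℕ := fun v => Nat.find (hWex v) with hWdef
  have hWspec : ∀ v, cpt N a0 (v + W v) ∈ A := fun v => Nat.find_spec (hWex v)
  have hWmin : ∀ v w, w < W v → cpt N a0 (v + w) ∉ A := fun v w hw => Nat.find_min (hWex v) hw
  have hcpt_per : cpt N a0 N = a0 := by
    have := cpt_period (N := N) a0 0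
    rwa [zero_add, cpt_zero ha0Icc.1 ha0Icc.2] at this
  have hWle : ∀ v, v ≤ N → v + W v ≤ N := by
    intro v hv
    have : W v ≤ N - v := by
      apply Nat.find_le
      rw [show v + (N - v) = N by omega, hcpt_per]
      exact ha0A
    omega
  -- the greedy walk
  set step : ℕ → ℕ := fun u => (u + L u) + W (u + L u) with hstepdef
  set seq : ℕ → ℕ := fun k => step^[k] 0 with hseqdef
  have hseq0 : seq 0 = 0 := rfl
  have hseqS : ∀ k, seq (k + 1) = step (seq k) := by
    intro k
    simp only [hseqdef, Function.iterate_succ_apply']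
  have hstep_lt : ∀ u, u < step u := by
    intro u
    have := hL1 u
    simp only [hstepdef]
    omega
  have hstep_le : ∀ u, u < N → step u ≤ N := by
    intro u hu
    have h1 := hLle u hu
    have h2 := hWle (u + L u) h1
    simp only [hstepdef]
    omega
  have hreach : ∃ k, seq k = N := by
    have claim : ∀ k, (∃ j ≤ k, seq j = N) ∨ (seq k < N ∧ k ≤ seq k) := by
      intro k
      induction k with
      | zero => exact Or.inr ⟨by rw [hseq0]; omega, by omega⟩
      | succ k ih =>
        rcases ih with ⟨j, hj, hjN⟩ | ⟨h1, h2⟩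
        · exact Or.inl ⟨j, by omega, hjN⟩
        · have hlt := hstep_lt (seq k)
          have hle := hstep_le (seq k) h1
          rw [← hseqS k] at hlt hle
          rcases eq_or_lt_of_le hle with he | hl
          · exact Or.inl ⟨k + 1, le_rfl, he⟩
          · exact Or.inr ⟨hl, by omega⟩
    rcases claim N with ⟨j, _, hjN⟩ | ⟨h1, h2⟩
    · exact ⟨j, hjN⟩
    · omega
  set p : ℕ := Nat.find hreach with hpdef
  have hseqp : seq p = N := Nat.find_spec hreach
  have hppos : 0 < p := by
    rcases Nat.eq_zero_or_pos p with h | h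
    · rw [h] at hseqp; rw [hseq0] at hseqp; omega
    · exact h
  have hlt : ∀ k, k < p → seq k < N := by
    intro k hk
    have hne : seq k ≠ N := Nat.find_min hreach hk
    -- also need seq k ≤ N
    have : ∀ m, (∀ j ≤ m, seq j ≠ N) → seq m < N := by
      intro m
      induction m with
      | zero => intro _; rw [hseq0]; omega
      | succ m ih =>
        intro hall
        have h1 : seq m < N := ih (fun j hj => hall j (by omega))
        have h2 := hstep_le (seq m) h1
        rw [← hseqS m] at h2
        have h3 := hall (m + 1) le_rfl
        omega
    exact this k (fun j hj => Nat.find_min hreach (by omega))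
  have hmono1 : ∀ k, k < p → seq k < seq (k + 1) := by
    intro k hk
    rw [hseqS k]
    exact hstep_lt (seq k)
  have hmonole : ∀ j, j ≤ p → ∀ i, i ≤ j → seq i ≤ seq j := by
    intro j
    induction j with
    | zero => intro _ i hi; rw [Nat.le_zero.mp hi]
    | succ j ih =>
      intro hjp i hij
      rcases Nat.eq_or_lt_of_le hij with he | hl
      · rw [he]
      · have h1 := hmono1 j (by omega)
        have h2 := ih (by omega) i (by omega)
        omega
  have hseqle : ∀ k, k ≤ p → seq k ≤ N := by
    intro k hk
    rcases Nat.eq_or_lt_of_le hk with he | hl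
    · rw [he, hseqp]
    · exact le_of_lt (hlt k hl)
  have hAseq : ∀ k, k ≤ p → cpt N a0 (seq k) ∈ A := by
    intro k _
    cases k with
    | zero => rw [hseq0, cpt_zero ha0Icc.1 ha0Icc.2]; exact ha0A
    | succ k =>
      rw [hseqS k]
      exact hWspec (seq k + L (seq k))
  have hsplit : ∀ k, seq (k + 1) = (seq k + L (seq k)) + W (seq k + L (seq k)) := by
    intro k; rw [hseqS k]
  -- the structure
  refine ⟨⟨p, fun i => cpt N a0 (seq i), fun i => L (seq i), fun i => seq (i + 1) - (seq i + L (seq i))⟩, ?_⟩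
  -- helper facts per index
  have hfacts : ∀ i, i < p → seq i < N ∧ seq i + L (seq i) ≤ N ∧
      seq i + L (seq i) ≤ seq (i + 1) ∧ seq (i + 1) ≤ N := by
    intro i hi
    have h1 := hlt i hi
    have h2 := hLle (seq i) h1
    have h3 : seq i + L (seq i) ≤ seq (i + 1) := by rw [hsplit i]; omega
    have h4 : seq (i + 1) ≤ N := hseqle (i + 1) (by omega)
    exact ⟨h1, h2, h3, h4⟩
  -- membership characterization of Blk ∪ Gap
  have hBG : ∀ i, i < p →
      (CircData.Blk ⟨p, fun i => cpt N a0 (seq i), fun i => L (seq i), fun i => seq (i + 1) - (seq i + L (seq i))⟩ N i ∪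
       CircData.Gap ⟨p, fun i => cpt N a0 (seq i), fun i => L (seq i), fun i => seq (i + 1) - (seq i + L (seq i))⟩ N i)
      = cblock N (cpt N a0 (seq i)) (seq (i + 1) - seq i) := by
    intro i hi
    obtain ⟨h1, h2, h3, h4⟩ := hfacts i hi
    simp only [CircData.Blk, CircData.Gap]
    rw [← cblock_union]
    congr 1
    omega
  have hmemBG : ∀ i, i < p → ∀ y,
      (y ∈ cblock N (cpt N a0 (seq i)) (seq (i + 1) - seq i) ↔
        ∃ t, seq i ≤ t ∧ t < seq (i + 1) ∧ cpt N a0 t = y) := by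
    intro i hi y
    rw [cblock_eq_image_Ico]
    simp only [Finset.mem_image, Finset.mem_Ico]
    obtain ⟨h1, h2, h3, h4⟩ := hfacts i hi
    constructor
    · rintro ⟨t, ⟨ht1, ht2⟩, rfl⟩; exact ⟨t, ht1, by omega, rfl⟩
    · rintro ⟨t, ht1, ht2, rfl⟩; exact ⟨t, ⟨ht1, by omega⟩, rfl⟩
  refine ⟨hppos, fun i _ => hL1 (seq i), ?_, ?_, ?_, ?_, ?_, fun i hi => hAseq i (le_of_lt hi), ?_, ?_, ?_⟩
  -- cond 3 : consecutive
  · intro i hi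
    have hi' : i + 1 < p := hi
    simp only
    rw [cpt_add]
    congr 1
    have := (hfacts i (by omega)).2.2.1
    omega
  -- cond 4 : wrap
  · simp only
    rw [cpt_add, hseq0]
    have hpp : p - 1 + 1 = p := by omega
    have hfb := (hfacts (p - 1) (by omega)).2.2.1
    have e1 : seq (p - 1 + 1) = N := by rw [hpp, hseqp]
    have h1 : seq (p - 1) + (L (seq (p - 1)) + (seq (p - 1 + 1) - (seq (p - 1) + L (seq (p - 1))))) = N := by
      omega
    rw [h1, hcpt_per, cpt_zero ha0Icc.1 ha0Icc.2]
  -- cond 5 : partition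
  · ext y
    simp only [Finset.mem_biUnion, Finset.mem_range]
    constructor
    · rintro ⟨i, hi, hy⟩
      rw [hBG i hi] at hy
      exact cblock_subset_Icc hN _ _ hy
    · intro hy
      rw [Finset.mem_Icc] at hy
      obtain ⟨t, htN, hct⟩ := cpt_surj hN a0 y hy.1 hy.2
      set i0 := Nat.findGreatest (fun i => seq i ≤ t) p with hi0def
      have hP0 : seq 0 ≤ t := by rw [hseq0]; omega
      have hspec : seq i0 ≤ t := Nat.findGreatest_spec (P := fun i => seq i ≤ t) (Nat.zero_le p) hP0
      have hi0le : i0 ≤ p := Nat.findGreatest_le p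
      have hi0lt : i0 < p := by
        rcases Nat.eq_or_lt_of_le hi0le with he | hl
        · exfalso; rw [he, hseqp] at hspec; omega
        · exact hl
      have hnext : t < seq (i0 + 1) := by
        by_contra hc
        push_neg at hc
        have hk' : Nat.findGreatest (fun i => seq i ≤ t) p < i0 + 1 := by
          rw [← hi0def]; omega
        have hgr := Nat.findGreatest_is_greatest hk' (show i0 + 1 ≤ p by omega)
        exact hgr hc
      refine ⟨i0, hi0lt, ?_⟩
      rw [hBG i0 hi0lt, hmemBG i0 hi0lt]
      exact ⟨t, hspec, hnext, hct⟩
  -- cond 6 : pairwise disjoint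
  · intro i hi0 j hj0 hij
    have hi : i < p := hi0
    have hj : j < p := hj0
    rw [Finset.disjoint_left]
    intro y hyi hyj
    rw [hBG i hi, hmemBG i hi] at hyi
    rw [hBG j hj, hmemBG j hj] at hyj
    obtain ⟨t1, ht11, ht12, hct1⟩ := hyi
    obtain ⟨t2, ht21, ht22, hct2⟩ := hyj
    have hteq : t1 = t2 := by
      apply cpt_inj hN a0 _ _ (hct1.trans hct2.symm)
      · exact lt_of_lt_of_le ht12 ((hfacts i hi).2.2.2)
      · exact lt_of_lt_of_le ht22 ((hfacts j hj).2.2.2)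
    rcases Nat.lt_or_ge i j with h | h
    · have := hmonole j (by omega) (i + 1) (by omega)
      omega
    · have hji : j < i := by omega
      have := hmonole i (by omega) (j + 1) (by omega)
      omega
  -- cond 7 : Blk and Gap disjoint
  · intro i hi0
    have hi : i < p := hi0
    obtain ⟨h1, h2, h3, h4⟩ := hfacts i hi
    rw [Finset.disjoint_left]
    intro y hyB hyG
    simp only [CircData.Blk, CircData.Gap] at hyB hyG
    rw [mem_cblock] at hyB hyG
    obtain ⟨t1, ht1, hct1⟩ := hyB
    obtain ⟨t2, ht2, hct2⟩ := hyG
    rw [cpt_add] at hct1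
    rw [cpt_add, cpt_add] at hct2
    have h5 : seq i + t1 < N := by omega
    have h6 : seq i + (L (seq i) + t2) < N := by omega
    have heq : seq i + t1 = seq i + (L (seq i) + t2) :=
      cpt_inj hN a0 h5 h6 (hct1.trans hct2.symm)
    omega
  -- cond 9 : gaps avoid A
  · intro i hi0 x hx
    have hi : i < p := hi0
    simp only [CircData.Gap] at hx
    rw [mem_cblock] at hx
    obtain ⟨w, hw, hcw⟩ := hx
    rw [cpt_add, cpt_add] at hcw
    have hW : seq (i + 1) - (seq i + L (seq i)) = W (seq i + L (seq i)) := by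
      rw [hsplit i]; omega
    rw [hW] at hw
    rw [← hcw]
    have hnm := hWmin (seq i + L (seq i)) w hw
    rwa [show seq i + L (seq i) + w = seq i + (L (seq i) + w) by omega] at hnm
  -- cond 10 : (iii)
  · intro i hi0
    have hi : i < p := hi0
    obtain ⟨h1, h2, h3, h4⟩ := hfacts i hi
    have hcardB : (cblock N (cpt N a0 (seq i)) (L (seq i))).card = L (seq i) :=
      cblock_card_of_le hN (by omega)
    have hcardA : ((A ∩ cblock N (cpt N a0 (seq i)) (L (seq i))).card : ℝ)
        = (cnt (seq i + L (seq i)) : ℝ) - cnt (seq i) := by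
      rw [Finset.inter_comm]
      have := count_arc hN (A := A) a0 (u := seq i) (l := L (seq i)) h2
      simp only [hcntdef]
      push_cast [← this]
      ring
    simp only [CircData.Blk]
    rw [hcardB, hcardA]
    constructor
    · have := hLng (seq i)
      simp only [hgooddef] at this
      push_neg at this
      linarith
    · rcases Nat.eq_or_lt_of_le (hL1 (seq i)) with he | hl
      · -- L = 1
        have hc : cnt (seq i + 1) = cnt (seq i) + 1 := by
          simp only [hcntdef]
          rw [arcCnt_succ, if_pos (hAseq i (le_of_lt hi))]
        rw [← he, hc]
        push_cast
        linarith
      · -- L ≥ 2, use good at L - 1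
        have hg := hLmin (seq i) (L (seq i) - 1) (by omega) (by omega)
        simp only [hgooddef] at hg
        have hmono : (cnt (seq i + (L (seq i) - 1)) : ℝ) ≤ cnt (seq i + L (seq i)) := by
          exact_mod_cast arcCnt_mono a0 (by omega)
        have hcast : ((L (seq i) - 1 : ℕ) : ℝ) = (L (seq i) : ℝ) - 1 := by
          rw [Nat.cast_sub (by omega)]
          norm_num
        rw [hcast] at hg
        nlinarith
  -- cond 11 : (iv)
  · intro i hi0 t ht10 ht20
    have hi : i < p := hi0
    have ht1 : 0 < t := ht10
    have ht2 : t < L (seq i) := ht20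
    obtain ⟨h1, h2, h3, h4⟩ := hfacts i hi
    simp only
    have hcardb : (cblock N (cpt N a0 (seq i)) t).card = t := cblock_card_of_le hN (by omega)
    have hcarda : ((cblock N (cpt N a0 (seq i)) t ∩ A).card : ℝ)
        = (cnt (seq i + t) : ℝ) - cnt (seq i) := by
      have := count_arc hN (A := A) a0 (u := seq i) (l := t) (by omega)
      simp only [hcntdef]
      push_cast [← this]
      ring
    rw [hcardb, hcarda]
    have hg := hLmin (seq i) t ht1 ht2
    simp only [hgooddef] at hg
    exact hg
end Exist

lemma iterate_mod {α : Type*} (f : α → α) {x : α} {q : ℕ} (h : f^[q] x = x) (m : ℕ) :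
    f^[m] x = f^[m % q] x := by
  conv_lhs => rw [← Nat.mod_add_div m q]
  rw [Function.iterate_add_apply, Function.iterate_mul, Function.iterate_fixed h]

section Uniq
set_option linter.unusedSectionVars false
variable {N : ℕ} {A : Finset ℕ} {δ : ℝ}

-- any block of a valid structure has length at most N (in fact < N)
lemma lenB_le (hN : 0 < N) (hδ0 : 0 ≤ δ) (hcard : δ * (A.card : ℝ) ≤ (N : ℝ) - 1)
    {S : CircData} (hS : IsBlockStructure N A δ S) {i : ℕ} (hi : i < S.p) : S.lenB i ≤ N := by
  obtain ⟨-, -, -, -, -, -, -, -, -, h10, -⟩ := hS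
  have h2 := (h10 i hi).2
  have h3 : ((A ∩ S.Blk N i).card : ℝ) ≤ (A.card : ℝ) := by
    exact_mod_cast Finset.card_le_card (Finset.inter_subset_left)
  have h4 : ((S.Blk N i).card : ℝ) ≤ (N : ℝ) - 1 := by
    calc ((S.Blk N i).card : ℝ) ≤ δ * ((A ∩ S.Blk N i).card : ℝ) := h2
      _ ≤ δ * (A.card : ℝ) := mul_le_mul_of_nonneg_left h3 hδ0
      _ ≤ (N : ℝ) - 1 := hcard
  have h5 : (S.Blk N i).card = min (S.lenB i) N := cblock_card hN _ _
  by_contra hc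
  push_neg at hc
  rw [h5, min_eq_right (by omega)] at h4
  linarith

lemma uniq_block_structure (hN : 0 < N) (hA : A ⊆ Finset.Icc 1 N) (hAne : A.Nonempty)
    (hδ1 : 1 ≤ δ) (hcard : δ * (A.card : ℝ) ≤ (N : ℝ) - 1) :
    ∀ S T : CircData, IsBlockStructure N A δ S → IsBlockStructure N A δ T →
      (Finset.range S.p).image (fun i => (S.Blk N i, S.Gap N i)) =
        (Finset.range T.p).image (fun i => (T.Blk N i, T.Gap N i)) := by
  classical
  have hδ0 : (0:ℝ) ≤ δ := by linarith
  obtain ⟨a0, ha0A, Ha⟩ := exists_good_origin hN hA hAne hδ1 hcard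
  have ha0Icc' := hA ha0A
  rw [Finset.mem_Icc] at ha0Icc'
  have hcpt_per : cpt N a0 N = a0 := by
    have := cpt_period (N := N) a0 0
    rwa [zero_add, cpt_zero ha0Icc'.1 ha0Icc'.2] at this
  set cnt : ℕ → ℕ := arcCnt N A a0 with hcntdef
  -- the canonical block-length and gap-length functions
  have hLex : ∀ x : ℕ, ∃ l : ℕ, 0 < l ∧ ¬ ((l : ℝ) + 1 ≤ δ * ((cblock N x l ∩ A).card : ℝ)) := by
    intro x
    refine ⟨N, hN, ?_⟩
    push_neg
    have h1 : ((cblock N x N ∩ A).card : ℝ) ≤ (A.card : ℝ) := by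
      exact_mod_cast Finset.card_le_card (Finset.inter_subset_right)
    have h2 : δ * ((cblock N x N ∩ A).card : ℝ) ≤ δ * A.card := mul_le_mul_of_nonneg_left h1 hδ0
    have hN1 : (1:ℝ) ≤ N := by exact_mod_cast hN
    linarith
  set LB : ℕ → ℕ := fun x => Nat.find (hLex x) with hLBdef
  have hWex : ∀ x : ℕ, ∃ w, cpt N x w ∈ A := by
    intro x
    obtain ⟨a, ha⟩ := hAne
    have haIcc := hA ha
    rw [Finset.mem_Icc] at haIcc
    obtain ⟨w, hw⟩ := cpt_reach hN (y := a) x 0 haIcc.1 haIcc.2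
    rw [zero_add] at hw
    exact ⟨w, by rw [hw]; exact ha⟩
  set WA : ℕ → ℕ := fun x => Nat.find (hWex x) with hWAdef
  set ns : ℕ → ℕ := fun x => cpt N x (LB x + WA (cpt N x (LB x))) with hnsdef
  set F : ℕ → Finset ℕ × Finset ℕ :=
    fun x => (cblock N x (LB x), cblock N (cpt N x (LB x)) (WA (cpt N x (LB x)))) with hFdef
  -- a0 is a block start of every valid structure
  have hstart : ∀ S : CircData, IsBlockStructure N A δ S → ∃ i < S.p, S.b i = a0 := by
    intro S hS
    obtain ⟨hp, h2, h3, h4, h5, h6, h7, h8, h9, h10, h11⟩ := hS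
    have ha0Icc : a0 ∈ Finset.Icc 1 N := hA ha0A
    rw [← h5] at ha0Icc
    rw [Finset.mem_biUnion] at ha0Icc
    obtain ⟨i, hi, hmem⟩ := ha0Icc
    rw [Finset.mem_range] at hi
    rw [Finset.mem_union] at hmem
    rcases hmem with hmB | hmG
    · -- in the block
      have hbIcc := hA (h8 i hi)
      rw [Finset.mem_Icc] at hbIcc
      rw [CircData.Blk, mem_cblock] at hmB
      obtain ⟨u, hu, hcu⟩ := hmB
      rcases Nat.eq_zero_or_pos u with hu0 | hupos
      · rw [hu0, cpt_zero hbIcc.1 hbIcc.2] at hcu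
        exact ⟨i, hi, hcu⟩
      · exfalso
        have hlenN : S.lenB i ≤ N :=
          lenB_le hN hδ0 hcard ⟨hp, h2, h3, h4, h5, h6, h7, h8, h9, h10, h11⟩ hi
        have hbi : S.b i = cpt N a0 (N - u) := by
          apply cpt_right_cancel hN hbIcc.1 hbIcc.2
            (Finset.mem_Icc.mp (cpt_mem_Icc hN a0 (N - u))).1
            (Finset.mem_Icc.mp (cpt_mem_Icc hN a0 (N - u))).2 (u := u)
          rw [hcu, cpt_add, show N - u + u = N by omega, hcpt_per]
        have hiv := h11 i hi u hupos hu
        rw [hbi] at hiv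
        have hcb : (cblock N (cpt N a0 (N - u)) u).card = u := cblock_card_of_le hN (by omega)
        have hct := count_arc hN (A := A) a0 (u := N - u) (l := u) (by omega)
        rw [show N - u + u = N by omega] at hct
        have hctR : ((cblock N (cpt N a0 (N - u)) u ∩ A).card : ℝ)
            = (cnt N : ℝ) - cnt (N - u) := by
          simp only [hcntdef]
          push_cast [← hct]
          ring
        rw [hcb, hctR] at hiv
        have hHa := Ha (N - u) (by omega)
        simp only [hcntdef] at hiv hHa
        have hcast : ((N - u : ℕ) : ℝ) = (N : ℝ) - u := by
          rw [Nat.cast_sub (by omega)]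
        rw [hcast] at hHa
        nlinarith
    · exfalso
      exact h9 i hi a0 hmG ha0A
  -- the pairs of every valid structure are the F-orbit of a0
  have hmain : ∀ S : CircData, IsBlockStructure N A δ S →
      ns^[S.p] a0 = a0 ∧
      (Finset.range S.p).image (fun i => (S.Blk N i, S.Gap N i)) =
        Finset.image F ((Finset.range S.p).image (fun i => ns^[i] a0)) := by
    intro S hS
    obtain ⟨i0, hi0, hbi0⟩ := hstart S hS
    obtain ⟨hp, h2, h3, h4, h5, h6, h7, h8, h9, h10, h11⟩ := hS
    -- block lengths are determined
    have hlenB : ∀ i < S.p, S.lenB i = LB (S.b i) := by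
      intro i hi
      have hlenN : S.lenB i ≤ N :=
        lenB_le hN hδ0 hcard ⟨hp, h2, h3, h4, h5, h6, h7, h8, h9, h10, h11⟩ hi
      apply le_antisymm
      · -- lenB ≤ LB
        by_contra hc
        push_neg at hc
        have hpos : 0 < LB (S.b i) := (Nat.find_spec (hLex (S.b i))).1
        have hng : ¬ ((LB (S.b i) : ℝ) + 1
            ≤ δ * ((cblock N (S.b i) (LB (S.b i)) ∩ A).card : ℝ)) :=
          (Nat.find_spec (hLex (S.b i))).2
        apply hng
        have hiv := h11 i hi (LB (S.b i)) hpos hc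
        rwa [cblock_card_of_le hN (by omega)] at hiv
      · -- LB ≤ lenB
        apply Nat.find_le
        refine ⟨h2 i hi, ?_⟩
        push_neg
        have h1 := (h10 i hi).1
        have hBcard : (S.Blk N i).card = S.lenB i := cblock_card_of_le hN hlenN
        rw [hBcard] at h1
        rw [CircData.Blk] at h1
        rw [Finset.inter_comm] at h1
        linarith
    -- the next block start is in A
    have hnextA : ∀ i < S.p, cpt N (S.b i) (S.lenB i + S.lenG i) ∈ A := by
      intro i hi
      rcases Nat.lt_or_ge (i + 1) S.p with h | h
      · rw [← h3 i h]
        exact h8 (i + 1) h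
      · have hieq : i = S.p - 1 := by omega
        rw [hieq, ← h4]
        exact h8 0 hp
    -- gap lengths are determined
    have hlenG : ∀ i < S.p, S.lenG i = WA (cpt N (S.b i) (S.lenB i)) := by
      intro i hi
      apply le_antisymm
      · -- lenG ≤ WA
        by_contra hc
        push_neg at hc
        have hspec : cpt N (cpt N (S.b i) (S.lenB i)) (WA (cpt N (S.b i) (S.lenB i))) ∈ A :=
          Nat.find_spec (hWex (cpt N (S.b i) (S.lenB i)))
        have hyGap : cpt N (cpt N (S.b i) (S.lenB i)) (WA (cpt N (S.b i) (S.lenB i)))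
            ∈ S.Gap N i := by
          rw [CircData.Gap, mem_cblock]
          exact ⟨WA (cpt N (S.b i) (S.lenB i)), hc, rfl⟩
        exact h9 i hi _ hyGap hspec
      · -- WA ≤ lenG
        apply Nat.find_le
        rw [cpt_add]
        exact hnextA i hi
    -- iteration
    have hns_step : ∀ i < S.p, ns (S.b i) = cpt N (S.b i) (S.lenB i + S.lenG i) := by
      intro i hi
      simp only [hnsdef]
      rw [← hlenB i hi, ← hlenG i hi]
    have hbit : ∀ i < S.p, S.b i = ns^[i] (S.b 0) := by
      intro i
      induction i with
      | zero => intro _; rfl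
      | succ i ih =>
        intro hi
        rw [Function.iterate_succ_apply', ← ih (by omega), hns_step i (by omega)]
        exact h3 i hi
    have hcyc0 : ns^[S.p] (S.b 0) = S.b 0 := by
      have hp1 : S.p - 1 + 1 = S.p := by omega
      rw [← hp1, Function.iterate_succ_apply', ← hbit (S.p - 1) (by omega),
        hns_step (S.p - 1) (by omega), ← h4]
    -- translate to orbit of a0
    have ha0it : a0 = ns^[i0] (S.b 0) := by rw [← hbi0]; exact hbit i0 hi0
    have hcyca : ns^[S.p] a0 = a0 := by
      rw [ha0it, ← Function.iterate_add_apply, add_comm, Function.iterate_add_apply, hcyc0]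
    refine ⟨hcyca, ?_⟩
    -- image equality
    have himg1 : (Finset.range S.p).image (fun i => (S.Blk N i, S.Gap N i))
        = (Finset.range S.p).image (fun i => F (ns^[i] (S.b 0))) := by
      apply Finset.image_congr
      intro i hi
      rw [Finset.mem_coe, Finset.mem_range] at hi
      simp only [CircData.Blk, CircData.Gap, hFdef]
      rw [← hbit i hi, ← hlenB i hi, ← hlenG i hi]
    have hrot : (Finset.range S.p).image (fun i => ns^[i] (S.b 0))
        = (Finset.range S.p).image (fun i => ns^[i] a0) := by
      have hb0a : S.b 0 = ns^[S.p - i0] a0 := by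
        rw [ha0it, ← Function.iterate_add_apply, show S.p - i0 + i0 = S.p by omega, hcyc0]
      apply Finset.Subset.antisymm
      · intro y hy
        rw [Finset.mem_image] at hy ⊢
        obtain ⟨i, hi, rfl⟩ := hy
        rw [Finset.mem_range] at hi
        refine ⟨(i + (S.p - i0)) % S.p, Finset.mem_range.mpr (Nat.mod_lt _ hp), ?_⟩
        rw [← iterate_mod ns hcyca, Function.iterate_add_apply, ← hb0a]
      · intro y hy
        rw [Finset.mem_image] at hy ⊢
        obtain ⟨i, hi, rfl⟩ := hy
        rw [Finset.mem_range] at hi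
        refine ⟨(i + i0) % S.p, Finset.mem_range.mpr (Nat.mod_lt _ hp), ?_⟩
        rw [← iterate_mod ns hcyc0, Function.iterate_add_apply, ← ha0it]
    rw [himg1, ← hrot, Finset.image_image]
    rfl
  -- combine
  intro S T hS hT
  obtain ⟨hcycS, himgS⟩ := hmain S hS
  obtain ⟨hcycT, himgT⟩ := hmain T hT
  rw [himgS, himgT]
  congr 1
  have hpS : 0 < S.p := hS.1
  have hpT : 0 < T.p := hT.1
  apply Finset.Subset.antisymm
  · intro y hy
    rw [Finset.mem_image] at hy ⊢
    obtain ⟨i, _, rfl⟩ := hy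
    exact ⟨i % T.p, Finset.mem_range.mpr (Nat.mod_lt _ hpT), (iterate_mod ns hcycT i).symm⟩
  · intro y hy
    rw [Finset.mem_image] at hy ⊢
    obtain ⟨i, _, rfl⟩ := hy
    exact ⟨i % S.p, Finset.mem_range.mpr (Nat.mod_lt _ hpS), (iterate_mod ns hcycS i).symm⟩
end Uniq

/-- Lemma 2.7 of Keller–Shen–Streib–Young. For every positive
integer `N`, every nonempty `A ⊆ [N]` and every real density `δ` with
`1 ≤ δ ≤ (N−1)/|A|`, the block structure of `A` with respect to `δ` on the circular
representation of `[N]` exists and is unique (uniqueness being of the resulting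
list of pairs (block, following gap), which is independent of the cyclic indexing). -/
theorem block_structure_exists_and_unique
    (N : ℕ) (hN : 0 < N) (A : Finset ℕ) (hA : A ⊆ Finset.Icc 1 N) (hAne : A.Nonempty)
    (δ : ℝ) (hδ1 : 1 ≤ δ) (hδ2 : δ ≤ ((N : ℝ) - 1) / (A.card : ℝ)) :
    (∃ S : CircData, IsBlockStructure N A δ S) ∧
    (∀ S T : CircData, IsBlockStructure N A δ S → IsBlockStructure N A δ T →
      (Finset.range S.p).image (fun i => (S.Blk N i, S.Gap N i)) =
        (Finset.range T.p).image (fun i => (T.Blk N i, T.Gap N i))) := by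
  have hcardpos : (0:ℝ) < (A.card : ℝ) := by exact_mod_cast Finset.card_pos.mpr hAne
  have hcard : δ * (A.card : ℝ) ≤ (N : ℝ) - 1 := (le_div_iff₀ hcardpos).mp hδ2
  exact ⟨exists_block_structure hN hA hAne hδ1 hcard,
    uniq_block_structure hN hA hAne hδ1 hcard⟩
end

section
/- Let d be a positive integer, k a nonnegative integer, and n = (d+1)k + d. Then for every subset A ⊆ [n] with |A| = d, one has |f_{k+1}(A)| = d + k. -/
/-- Lemma 3.2 of Keller–Shen–Streib–Young. Let `d ≥ 1`, `k ≥ 0`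
and `n = (d+1)k + d`. Then for every `A ⊆ [n]` with `|A| = d` one has
`|f_{k+1}(A)| = d + k`. -/
theorem card_fdelta_eq (d k n : ℕ) (hd : 1 ≤ d) (hn : n = (d + 1) * k + d)
    (A : Finset ℕ) (hA : A ⊆ Finset.Icc 1 n) (hcard : A.card = d)
    (S : CircData) (hS : IsBlockStructure n A ((k : ℝ) + 1) S) :
    (fdelta A S n).card = d + k := by

  obtain ⟨hp, hlenB, harr, hcyc, hpart, hdisj, hBG, hbA, hGA, hiii, hiv⟩ := hS
  -- each block has cardinality (k+1) * |A ∩ B i|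
  have hBlkcard : ∀ i < S.p, (S.Blk n i).card = (k + 1) * (A ∩ S.Blk n i).card := by
    intro i hi
    obtain ⟨h1, h2⟩ := hiii i hi
    have h2' : (S.Blk n i).card ≤ (k + 1) * (A ∩ S.Blk n i).card := by
      exact_mod_cast h2
    have h1' : (k + 1) * (A ∩ S.Blk n i).card < (S.Blk n i).card + 1 := by
      have : ((k : ℝ) + 1) * ((A ∩ S.Blk n i).card : ℝ) < ((S.Blk n i).card : ℝ) + 1 := by
        linarith
      exact_mod_cast this
    omega
  have hdisjBG : ∀ i ∈ Finset.range S.p, ∀ j ∈ Finset.range S.p, i ≠ j →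
      Disjoint (S.Blk n i ∪ S.Gap n i) (S.Blk n j ∪ S.Gap n j) := by
    intro i hi j hj hij
    exact hdisj i (Finset.mem_range.mp hi) j (Finset.mem_range.mp hj) hij
  -- total count
  have hsum : ∑ i ∈ Finset.range S.p, ((S.Blk n i).card + (S.Gap n i).card) = n := by
    have hcard' := congrArg Finset.card hpart
    rw [Finset.card_biUnion hdisjBG, Nat.card_Icc] at hcard'
    simp only [Nat.add_sub_cancel] at hcard'
    conv_rhs => rw [← hcard']
    refine Finset.sum_congr rfl fun i hi => ?_
    exact (Finset.card_union_of_disjoint (hBG i (Finset.mem_range.mp hi))).symm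
  -- A is covered by the blocks
  have hAeq : A = (Finset.range S.p).biUnion (fun i => A ∩ S.Blk n i) := by
    ext x
    simp only [Finset.mem_biUnion, Finset.mem_inter, Finset.mem_range]
    constructor
    · intro hx
      have hx' : x ∈ Finset.Icc 1 n := hA hx
      rw [← hpart] at hx'
      obtain ⟨i, hi, hxi⟩ := Finset.mem_biUnion.mp hx'
      rw [Finset.mem_union] at hxi
      rcases hxi with h | h
      · exact ⟨i, Finset.mem_range.mp hi, hx, h⟩
      · exact absurd hx (hGA i (Finset.mem_range.mp hi) x h)
    · rintro ⟨i, _, hx, _⟩; exact hx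
  have hAcard : ∑ i ∈ Finset.range S.p, (A ∩ S.Blk n i).card = d := by
    rw [← hcard]
    conv_rhs => rw [hAeq]
    rw [Finset.card_biUnion]
    intro i hi j hj hij
    exact (hdisjBG i hi j hj hij).mono
      (Finset.inter_subset_right.trans Finset.subset_union_left)
      (Finset.inter_subset_right.trans Finset.subset_union_left)
  have hBsum : ∑ i ∈ Finset.range S.p, (S.Blk n i).card = (k + 1) * d := by
    rw [← hAcard, Finset.mul_sum]
    exact Finset.sum_congr rfl fun i hi => hBlkcard i (Finset.mem_range.mp hi)
  have hGsum : ∑ i ∈ Finset.range S.p, (S.Gap n i).card = k := by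
    rw [Finset.sum_add_distrib, hBsum] at hsum
    have h1 : (k + 1) * d = k * d + d := by ring
    have h2 : n = k * d + k + d := by rw [hn]; ring
    rw [h1] at hsum
    generalize k * d = m at hsum h2
    omega
  have hdisjAG : Disjoint A (S.gapsUnion n) := by
    rw [Finset.disjoint_right]
    intro x hx
    obtain ⟨i, hi, hxi⟩ := Finset.mem_biUnion.mp hx
    exact hGA i (Finset.mem_range.mp hi) x hxi
  rw [fdelta, Finset.card_union_of_disjoint hdisjAG, hcard, CircData.gapsUnion,
    Finset.card_biUnion (fun i hi j hj hij =>
      (hdisjBG i hi j hj hij).mono Finset.subset_union_right Finset.subset_union_right),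
    hGsum]
end

section
/- Let d, l, n, s be integers with d ≥ 1, l ≥ 0, d + l ≤ n, and 1 ≤ s ≤ ⌊(n−d−l)/(d+l+1)⌋, and set m = (n+1)s + n. Then for every subset A ⊆ [m] with |A| = n, one has |f_{s+1}(A)| = n + s; moreover, for any two distinct subsets A, A' ⊆ [m] with |A| = |A'| = n, the intervals [A, f_{s+1}(A)] and [A', f_{s+1}(A')] are disjoint. -/
open Finset

namespace CK

theorem cpt_mem {N : ℕ} (hN : 0 < N) (x t : ℕ) : cpt N x t ∈ Icc 1 N := by
  unfold cpt
  have := Nat.mod_lt (x - 1 + t) hN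
  simp only [mem_Icc]; omega

theorem cpt_add (N x t u : ℕ) : cpt N (cpt N x t) u = cpt N x (t + u) := by
  unfold cpt
  simp only [Nat.add_sub_cancel]
  rw [Nat.mod_add_mod, Nat.add_assoc]

theorem cpt_congr {N t u : ℕ} (x : ℕ) (h : t % N = u % N) : cpt N x t = cpt N x u := by
  unfold cpt
  rw [Nat.add_mod (x-1) t, h, ← Nat.add_mod]

theorem cpt_mod_eq {N x t u : ℕ} (h : cpt N x t = cpt N x u) :
    t % N = u % N := by
  unfold cpt at h
  have h2 : (x - 1 + t) % N = (x - 1 + u) % N := by omega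
  exact Nat.ModEq.add_left_cancel' (x-1) h2

theorem cpt_inj {N x t u : ℕ} (ht : t < N) (hu : u < N) (h : cpt N x t = cpt N x u) :
    t = u := by
  have := cpt_mod_eq h
  rwa [Nat.mod_eq_of_lt ht, Nat.mod_eq_of_lt hu] at this

theorem cpt_self {N x : ℕ} (hx : x ∈ Icc 1 N) : cpt N x 0 = x := by
  simp only [mem_Icc] at hx
  unfold cpt
  rw [Nat.add_zero, Nat.mod_eq_of_lt (by omega)]
  omega

theorem mem_cblock {N x len z : ℕ} : z ∈ cblock N x len ↔ ∃ t < len, cpt N x t = z := by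
  unfold cblock; simp [Finset.mem_image]

theorem cblock_card {N x len : ℕ} (h : len ≤ N) : (cblock N x len).card = len := by
  unfold cblock
  rw [Finset.card_image_of_injOn, Finset.card_range]
  intro t ht u hu he
  simp only [Finset.mem_coe, Finset.mem_range] at ht hu
  exact cpt_inj (lt_of_lt_of_le ht h) (lt_of_lt_of_le hu h) he

theorem cblock_subset {N : ℕ} (hN : 0 < N) (x len : ℕ) : cblock N x len ⊆ Icc 1 N := by
  intro z hz
  rcases mem_cblock.1 hz with ⟨t, _, rfl⟩
  exact cpt_mem hN x t

theorem cblock_full {N : ℕ} (hN : 0 < N) (x : ℕ) : cblock N x N = Icc 1 N := by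
  apply Finset.eq_of_subset_of_card_le (cblock_subset hN x N)
  rw [cblock_card (le_refl N), Nat.card_Icc]
  omega

theorem cblock_of_ge {N x len : ℕ} (hN : 0 < N) (h : N ≤ len) :
    cblock N x len = Icc 1 N := by
  apply Finset.Subset.antisymm (cblock_subset hN x len)
  rw [← cblock_full hN x]
  exact Finset.image_subset_image (Finset.range_subset_range.2 h)

theorem exists_coord {N z : ℕ} (hN : 0 < N) (x : ℕ) (hz : z ∈ Icc 1 N) :
    ∃ t < N, cpt N x t = z := by
  have : z ∈ cblock N x N := (cblock_full hN x).symm ▸ hz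
  exact mem_cblock.1 this

theorem cblock_inter_card {N x len : ℕ} (h : len ≤ N) (B : Finset ℕ) :
    (cblock N x len ∩ B).card = ((range len).filter (fun t => cpt N x t ∈ B)).card := by
  unfold cblock
  rw [← Finset.filter_mem_eq_inter, Finset.filter_image, Finset.card_image_of_injOn]
  intro t ht u hu he
  simp only [Finset.coe_filter, Set.mem_setOf_eq, Finset.mem_range] at ht hu
  exact cpt_inj (lt_of_lt_of_le ht.1 h) (lt_of_lt_of_le hu.1 h) he


/-- clockwise distance from `y` to `x` on the circle `[N]`. -/
def cdist (N y x : ℕ) : ℕ := (x + N - y) % N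

theorem cdist_lt {N : ℕ} (hN : 0 < N) (y x : ℕ) : cdist N y x < N :=
  Nat.mod_lt _ hN

theorem cpt_cdist {N y x : ℕ} (hy : y ∈ Icc 1 N) (hx : x ∈ Icc 1 N) :
    cpt N y (cdist N y x) = x := by
  simp only [mem_Icc] at hy hx
  have hN : 0 < N := by omega
  unfold cpt cdist
  rw [Nat.add_mod_mod]
  have h1 : y - 1 + (x + N - y) = (x - 1) + N := by omega
  rw [h1, Nat.add_mod_right, Nat.mod_eq_of_lt (by omega)]
  omega

theorem cdist_cpt {N y t : ℕ} (hy : y ∈ Icc 1 N) (ht : t < N) :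
    cdist N y (cpt N y t) = t := by
  simp only [mem_Icc] at hy
  have hN : 0 < N := by omega
  unfold cpt cdist
  have hmlt := Nat.mod_lt (y - 1 + t) hN
  have h2 : (y - 1 + t) % N + 1 + N - y = (y - 1 + t) % N + ((N - y) + 1) := by omega
  rw [h2, Nat.mod_add_mod]
  have h3 : y - 1 + t + (N - y + 1) = t + N := by omega
  rw [h3, Nat.add_mod_right, Nat.mod_eq_of_lt ht]

theorem cdist_inj {N y z z' : ℕ} (hy : y ∈ Icc 1 N) (hz : z ∈ Icc 1 N) (hz' : z' ∈ Icc 1 N)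
    (h : cdist N y z = cdist N y z') : z = z' := by
  have := cpt_cdist hy hz
  rw [h, cpt_cdist hy hz'] at this
  exact this.symm

theorem cdist_self {N y : ℕ} (hy : y ∈ Icc 1 N) : cdist N y y = 0 := by
  simp only [mem_Icc] at hy
  unfold cdist
  have : y + N - y = N := by omega
  rw [this, Nat.mod_self]

theorem cdist_eq_zero {N y z : ℕ} (hy : y ∈ Icc 1 N) (hz : z ∈ Icc 1 N)
    (h : cdist N y z = 0) : z = y := cdist_inj hy hz hy (by rw [h, cdist_self hy])

theorem mem_arc {N y x z : ℕ} (hy : y ∈ Icc 1 N) (hx : x ∈ Icc 1 N) (hz : z ∈ Icc 1 N) :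
    z ∈ cblock N y (cdist N y x + 1) ↔ cdist N y z ≤ cdist N y x := by
  have hN : 0 < N := by simp only [mem_Icc] at hy; omega
  constructor
  · rintro hmem
    rcases mem_cblock.1 hmem with ⟨t, ht, rfl⟩
    have htN : t < N := lt_of_lt_of_le ht (cdist_lt hN y x)
    rw [cdist_cpt hy htN]
    omega
  · intro h
    exact mem_cblock.2 ⟨cdist N y z, by omega, cpt_cdist hy hz⟩

theorem cdist_triangle_mod {N y z x : ℕ} (hy : y ∈ Icc 1 N) (hz : z ∈ Icc 1 N)
    (hx : x ∈ Icc 1 N) :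
    (cdist N y z + cdist N z x) % N = cdist N y x := by
  simp only [mem_Icc] at hy hz hx
  unfold cdist
  rw [Nat.add_mod_mod, Nat.mod_add_mod]
  have h1 : z + N - y + (x + N - z) = (x + N - y) + N := by omega
  rw [h1, Nat.add_mod_right]

theorem cdist_comparison {N y z x : ℕ} (hy : y ∈ Icc 1 N) (hz : z ∈ Icc 1 N)
    (hx : x ∈ Icc 1 N) :
    (cdist N y z ≤ cdist N y x ↔ cdist N z x ≤ cdist N y x) := by
  have hN : 0 < N := by simp only [mem_Icc] at hy; omega
  have ht := cdist_triangle_mod hy hz hx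
  have b1 := cdist_lt hN y z
  have b2 := cdist_lt hN z x
  have b3 := cdist_lt hN y x
  set b := cdist N y z
  set c := cdist N z x
  set a := cdist N y x
  have hcases : b + c = a ∨ b + c = a + N := by
    rcases Nat.lt_or_ge (b + c) N with h | h
    · left; rw [Nat.mod_eq_of_lt h] at ht; omega
    · right
      have h2 : b + c - N < N := by omega
      rw [Nat.mod_eq_sub_mod h, Nat.mod_eq_of_lt h2] at ht
      omega
  omega

theorem cdist_swap {N y x : ℕ} (hy : y ∈ Icc 1 N) (hx : x ∈ Icc 1 N) (hne : x ≠ y) :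
    cdist N y x + cdist N x y = N := by
  have hN : 0 < N := by simp only [mem_Icc] at hy; omega
  have ht := cdist_triangle_mod hy hx hy
  rw [cdist_self hy] at ht
  have b1 := cdist_lt hN y x
  have b2 := cdist_lt hN x y
  have h1 : cdist N y x ≠ 0 := fun h => hne (cdist_eq_zero hy hx h)
  have h2 : cdist N y x + cdist N x y < 2 * N := by omega
  rcases Nat.lt_or_ge (cdist N y x + cdist N x y) N with h | h
  · rw [Nat.mod_eq_of_lt h] at ht
    have h3 : cdist N x y ≠ 0 := fun hh => (by omega : cdist N y x = 0 → False) (by omega)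
    omega
  · have h3 : (cdist N y x + cdist N x y) % N = cdist N y x + cdist N x y - N := by
      rw [Nat.mod_eq_sub_mod h, Nat.mod_eq_of_lt (by omega)]
    omega

/-- cumulative coordinates of block starts -/
def Tacc (S : CircData) : ℕ → ℕ
  | 0 => 0
  | i+1 => Tacc S i + (S.lenB i + S.lenG i)

def cntIn (m : ℕ) (A : Finset ℕ) (β u : ℕ) : ℕ :=
  ((range u).filter (fun c => cpt m β c ∈ A)).card

def Vf (s m : ℕ) (A : Finset ℕ) (β : ℕ) (u : ℕ) : ℤ :=
  ((s : ℤ) + 1) * (cntIn m A β u : ℤ) - (u : ℤ)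

def gapSet (S : CircData) : Finset ℕ :=
  (range S.p).biUnion fun i => Ico (Tacc S i + S.lenB i) (Tacc S (i+1))

def gcnt (S : CircData) (m u : ℕ) : ℕ :=
  ((range u).filter (fun c => c % m ∈ gapSet S)).card

structure Good (m n s : ℕ) (A : Finset ℕ) (S : CircData) : Prop where
  hbs : IsBlockStructure m A ((s : ℝ) + 1) S
  hsub : A ⊆ Finset.Icc 1 m
  hcA : A.card = n
  hm : m = (n + 1) * s + n
  hs : 1 ≤ s
  hn : 1 ≤ n

namespace Good

variable {m n s : ℕ} {A : Finset ℕ} {S : CircData}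

theorem hm0 (H : Good m n s A S) : 0 < m := by
  have := H.hm; have := H.hs; have := H.hn; nlinarith

theorem hp (H : Good m n s A S) : 0 < S.p := H.hbs.1
theorem hlenB (H : Good m n s A S) : ∀ i < S.p, 0 < S.lenB i := H.hbs.2.1
theorem harr (H : Good m n s A S) :
    ∀ i, i + 1 < S.p → S.b (i + 1) = cpt m (S.b i) (S.lenB i + S.lenG i) := H.hbs.2.2.1
theorem hpart (H : Good m n s A S) :
    (range S.p).biUnion (fun i => S.Blk m i ∪ S.Gap m i) = Icc 1 m := H.hbs.2.2.2.2.1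
theorem hdisj (H : Good m n s A S) :
    ∀ i < S.p, ∀ j < S.p, i ≠ j →
      Disjoint (S.Blk m i ∪ S.Gap m i) (S.Blk m j ∪ S.Gap m j) := H.hbs.2.2.2.2.2.1
theorem hdisjBG (H : Good m n s A S) :
    ∀ i < S.p, Disjoint (S.Blk m i) (S.Gap m i) := H.hbs.2.2.2.2.2.2.1
theorem hbA (H : Good m n s A S) : ∀ i < S.p, S.b i ∈ A := H.hbs.2.2.2.2.2.2.2.1
theorem hgapA (H : Good m n s A S) :
    ∀ i < S.p, ∀ x ∈ S.Gap m i, x ∉ A := H.hbs.2.2.2.2.2.2.2.2.1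
theorem hiii (H : Good m n s A S) :
    ∀ i < S.p, ((s : ℝ) + 1) * ((A ∩ S.Blk m i).card : ℝ) - 1 < ((S.Blk m i).card : ℝ) ∧
      ((S.Blk m i).card : ℝ) ≤ ((s : ℝ) + 1) * ((A ∩ S.Blk m i).card : ℝ) :=
  H.hbs.2.2.2.2.2.2.2.2.2.1
theorem hiv (H : Good m n s A S) :
    ∀ i < S.p, ∀ t, 0 < t → t < S.lenB i →
      ((cblock m (S.b i) t).card : ℝ) + 1 ≤
        ((s : ℝ) + 1) * ((cblock m (S.b i) t ∩ A).card : ℝ) :=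
  H.hbs.2.2.2.2.2.2.2.2.2.2

/-- |B i| = (s+1) · |A ∩ B i| -/
theorem blk_card_eq (H : Good m n s A S) {i : ℕ} (hi : i < S.p) :
    (S.Blk m i).card = (s + 1) * (A ∩ S.Blk m i).card := by
  obtain ⟨h1, h2⟩ := H.hiii i hi
  have hle : ((S.Blk m i).card : ℝ) ≤ ((s + 1) * (A ∩ S.Blk m i).card : ℕ) := by
    push_cast; linarith
  have hge : (((s + 1) * (A ∩ S.Blk m i).card : ℕ) : ℝ) < ((S.Blk m i).card : ℝ) + 1 := by
    push_cast; linarith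
  have hle' := Nat.cast_le (α := ℝ) |>.mp hle
  have hge' : (s + 1) * (A ∩ S.Blk m i).card < (S.Blk m i).card + 1 := by exact_mod_cast hge
  omega

/-- A is the disjoint union of the A ∩ B i -/
theorem A_eq_biUnion (H : Good m n s A S) :
    A = (range S.p).biUnion (fun i => A ∩ S.Blk m i) := by
  apply Finset.Subset.antisymm
  · intro x hx
    have hx' : x ∈ (range S.p).biUnion (fun i => S.Blk m i ∪ S.Gap m i) :=
      (H.hpart).symm ▸ (H.hsub hx)
    rcases Finset.mem_biUnion.1 hx' with ⟨i, hi, hxi⟩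
    rcases Finset.mem_union.1 hxi with hb | hg
    · exact Finset.mem_biUnion.2 ⟨i, hi, Finset.mem_inter.2 ⟨hx, hb⟩⟩
    · exact absurd hx (H.hgapA i (Finset.mem_range.1 hi) x hg)
  · intro x hx
    rcases Finset.mem_biUnion.1 hx with ⟨i, _, hxi⟩
    exact (Finset.mem_inter.1 hxi).1

theorem sum_a (H : Good m n s A S) :
    ∑ i ∈ range S.p, (A ∩ S.Blk m i).card = n := by
  rw [← H.hcA]
  conv_rhs => rw [H.A_eq_biUnion]
  rw [Finset.card_biUnion]
  intro i hi j hj hij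
  have hd := H.hdisj i (Finset.mem_range.1 hi) j (Finset.mem_range.1 hj) hij
  exact Finset.disjoint_of_subset_left (Finset.inter_subset_right.trans Finset.subset_union_left)
    (Finset.disjoint_of_subset_right (Finset.inter_subset_right.trans Finset.subset_union_left) hd)

theorem sum_cards (H : Good m n s A S) :
    ∑ i ∈ range S.p, ((S.Blk m i).card + (S.Gap m i).card) = m := by
  have h2 : ∑ i ∈ range S.p, (S.Blk m i ∪ S.Gap m i).card = m := by
    rw [← Finset.card_biUnion
      (fun i hi j hj hij => H.hdisj i (Finset.mem_range.1 hi) j (Finset.mem_range.1 hj) hij),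
      H.hpart, Nat.card_Icc]
    omega
  calc ∑ i ∈ range S.p, ((S.Blk m i).card + (S.Gap m i).card)
      = ∑ i ∈ range S.p, (S.Blk m i ∪ S.Gap m i).card := by
        apply Finset.sum_congr rfl
        intro i hi
        exact (Finset.card_union_of_disjoint (H.hdisjBG i (Finset.mem_range.1 hi))).symm
    _ = m := h2

theorem sum_blk (H : Good m n s A S) :
    ∑ i ∈ range S.p, (S.Blk m i).card = (s + 1) * n := by
  rw [← H.sum_a, Finset.mul_sum]
  exact Finset.sum_congr rfl fun i hi => H.blk_card_eq (Finset.mem_range.1 hi)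

theorem sum_gap (H : Good m n s A S) :
    ∑ i ∈ range S.p, (S.Gap m i).card = s := by
  have h1 := H.sum_cards
  have h2 := H.sum_blk
  rw [Finset.sum_add_distrib, h2] at h1
  have h3 : m = (s+1) * n + s := by rw [H.hm]; ring
  exact Nat.add_left_cancel (h1.trans h3)

theorem gapsUnion_card (H : Good m n s A S) : (S.gapsUnion m).card = s := by
  unfold CircData.gapsUnion
  rw [Finset.card_biUnion, H.sum_gap]
  intro i hi j hj hij
  exact Finset.disjoint_of_subset_left Finset.subset_union_right
    (Finset.disjoint_of_subset_right Finset.subset_union_right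
      (H.hdisj i (Finset.mem_range.1 hi) j (Finset.mem_range.1 hj) hij))

theorem A_disj_gaps (H : Good m n s A S) : Disjoint A (S.gapsUnion m) := by
  unfold CircData.gapsUnion
  rw [Finset.disjoint_biUnion_right]
  intro i hi
  rw [Finset.disjoint_right]
  intro x hx
  exact H.hgapA i (Finset.mem_range.1 hi) x hx

theorem part1 (H : Good m n s A S) : (fdelta A S m).card = n + s := by
  unfold fdelta
  rw [Finset.card_union_of_disjoint H.A_disj_gaps, H.hcA, H.gapsUnion_card]

/-- block length facts -/
theorem blk_len (H : Good m n s A S) {i : ℕ} (hi : i < S.p) :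
    S.lenB i ≤ m ∧ (S.Blk m i).card = S.lenB i := by
  rcases le_or_gt (S.lenB i) m with h | h
  · exact ⟨h, cblock_card h⟩
  · exfalso
    have hfull : S.Blk m i = Icc 1 m := cblock_of_ge H.hm0 (le_of_lt h)
    have hAB : A ∩ S.Blk m i = A := by
      rw [hfull]; exact Finset.inter_eq_left.2 H.hsub
    have hc : (S.Blk m i).card = m := by rw [hfull, Nat.card_Icc]; omega
    have e1 : m = (s + 1) * n := by
      rw [← H.hcA, ← hAB, ← H.blk_card_eq hi, hc]
    have e2 : m = (s + 1) * n + s := by rw [H.hm]; ring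
    have : (s + 1) * n = (s + 1) * n + s := e1.symm.trans e2
    have hs := H.hs
    omega

theorem gap_len (H : Good m n s A S) {i : ℕ} (hi : i < S.p) :
    (S.Gap m i).card = S.lenG i ∧ S.lenG i ≤ s := by
  have hle : (S.Gap m i).card ≤ s := by
    rw [← H.sum_gap]
    exact Finset.single_le_sum (f := fun j => (S.Gap m j).card) (fun j _ => Nat.zero_le _)
      (Finset.mem_range.2 hi)
  have hsm : s < m := by
    have := H.hm; have := H.hs; have := H.hn; nlinarith
  rcases le_or_gt (S.lenG i) m with h | h
  · have := cblock_card (N := m) (x := cpt m (S.b i) (S.lenB i)) h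
    have hcg : (S.Gap m i).card = S.lenG i := this
    exact ⟨hcg, hcg ▸ hle⟩
  · exfalso
    have hfull : S.Gap m i = Icc 1 m := cblock_of_ge H.hm0 (le_of_lt h)
    have : (S.Gap m i).card = m := by rw [hfull, Nat.card_Icc]; omega
    omega

theorem Tacc_sum (S' : CircData) (k : ℕ) :
    Tacc S' k = ∑ i ∈ range k, (S'.lenB i + S'.lenG i) := by
  induction k with
  | zero => rfl
  | succ k ih => rw [Finset.sum_range_succ, ← ih]; rfl

theorem Tacc_mono (S' : CircData) {i j : ℕ} (h : i ≤ j) : Tacc S' i ≤ Tacc S' j := by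
  induction j with
  | zero => rw [Nat.le_zero.1 h]
  | succ j ih =>
    rcases Nat.lt_or_ge i (j+1) with h' | h'
    · have := ih (by omega)
      have : Tacc S' j ≤ Tacc S' (j+1) := Nat.le_add_right _ _
      omega
    · have : i = j + 1 := by omega
      subst this; omega

theorem Tacc_p (H : Good m n s A S) : Tacc S S.p = m := by
  rw [Tacc_sum]
  calc ∑ i ∈ range S.p, (S.lenB i + S.lenG i)
      = ∑ i ∈ range S.p, ((S.Blk m i).card + (S.Gap m i).card) := by
        apply Finset.sum_congr rfl
        intro i hi
        rw [(H.blk_len (Finset.mem_range.1 hi)).2, (H.gap_len (Finset.mem_range.1 hi)).1]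
    _ = m := H.sum_cards

theorem Tacc_lt (H : Good m n s A S) {i : ℕ} (hi : i < S.p) :
    Tacc S i < Tacc S (i+1) := by
  have := H.hlenB i hi
  show Tacc S i < Tacc S i + (S.lenB i + S.lenG i)
  omega

theorem Tacc_le_m (H : Good m n s A S) {i : ℕ} (hi : i ≤ S.p) : Tacc S i ≤ m :=
  H.Tacc_p ▸ Tacc_mono S hi

theorem b_coord (H : Good m n s A S) {i : ℕ} (hi : i < S.p) :
    S.b i = cpt m (S.b 0) (Tacc S i) := by
  induction i with
  | zero => exact (cpt_self (H.hsub (H.hbA 0 H.hp))).symm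
  | succ i ih =>
    rw [H.harr i hi, ih (by omega), cpt_add]
    rfl

theorem seg_find (S' : CircData) (k : ℕ) :
    ∀ u, u < Tacc S' k → ∃ i < k, Tacc S' i ≤ u ∧ u < Tacc S' (i+1) := by
  induction k with
  | zero => intro u h; simp [Tacc] at h
  | succ k ih =>
    intro u h
    rcases Nat.lt_or_ge u (Tacc S' k) with h' | h'
    · rcases ih u h' with ⟨i, hik, h1, h2⟩
      exact ⟨i, by omega, h1, h2⟩
    · exact ⟨k, by omega, h', h⟩

theorem mem_gapSet_iff (H : Good m n s A S) {c i : ℕ} (hi : i < S.p)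
    (h1 : Tacc S i ≤ c) (h2 : c < Tacc S (i+1)) :
    c ∈ gapSet S ↔ Tacc S i + S.lenB i ≤ c := by
  constructor
  · intro hmem
    rcases Finset.mem_biUnion.1 hmem with ⟨j, hj, hcj⟩
    rw [Finset.mem_Ico] at hcj
    have hj' := Finset.mem_range.1 hj
    rcases Nat.lt_trichotomy j i with hji | hji | hji
    · have : Tacc S (j+1) ≤ Tacc S i := Tacc_mono S (by omega)
      omega
    · subst hji; exact hcj.1
    · have : Tacc S (i+1) ≤ Tacc S j := Tacc_mono S (by omega)
      have : Tacc S j ≤ Tacc S j + S.lenB j := Nat.le_add_right _ _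
      omega
  · intro h
    refine Finset.mem_biUnion.2 ⟨i, Finset.mem_range.2 hi, Finset.mem_Ico.2 ⟨h, h2⟩⟩

end Good

theorem cntIn_succ (m : ℕ) (A : Finset ℕ) (β u : ℕ) :
    cntIn m A β (u+1) = cntIn m A β u + (if cpt m β u ∈ A then 1 else 0) := by
  unfold cntIn
  rw [Finset.range_add_one, Finset.filter_insert]
  split
  · rw [Finset.card_insert_of_notMem (by simp [Finset.mem_filter])]
  · omega

theorem gcnt_succ (S' : CircData) (m u : ℕ) :
    gcnt S' m (u+1) = gcnt S' m u + (if u % m ∈ gapSet S' then 1 else 0) := by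
  unfold gcnt
  rw [Finset.range_add_one, Finset.filter_insert]
  split
  · rw [Finset.card_insert_of_notMem (by simp [Finset.mem_filter])]
  · omega

theorem gcnt_mono (S' : CircData) (m : ℕ) {u v : ℕ} (h : u ≤ v) :
    gcnt S' m u ≤ gcnt S' m v := by
  unfold gcnt
  exact Finset.card_le_card (Finset.filter_subset_filter _ (by simpa using Finset.range_subset_range.2 h))

theorem cntIn_add (m : ℕ) (A : Finset ℕ) (β a r : ℕ) :
    cntIn m A β (a + r) =
      cntIn m A β a + ((range r).filter (fun j => cpt m β (a+j) ∈ A)).card := by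
  induction r with
  | zero => simp
  | succ r ih =>
    rw [← Nat.add_assoc, cntIn_succ, ih, Finset.range_add_one, Finset.filter_insert]
    split
    · rw [Finset.card_insert_of_notMem (by simp [Finset.mem_filter])]
      omega
    · omega

theorem Vf_succ_mem (s m : ℕ) (A : Finset ℕ) (β u : ℕ) (h : cpt m β u ∈ A) :
    Vf s m A β (u+1) = Vf s m A β u + s := by
  unfold Vf
  rw [cntIn_succ, if_pos h]
  push_cast
  ring

theorem Vf_succ_not (s m : ℕ) (A : Finset ℕ) (β u : ℕ) (h : cpt m β u ∉ A) :
    Vf s m A β (u+1) = Vf s m A β u - 1 := by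
  unfold Vf
  rw [cntIn_succ, if_neg h]
  push_cast
  ring

theorem Vf_window (s m : ℕ) (A : Finset ℕ) (β a r : ℕ) :
    Vf s m A β (a + r) = Vf s m A β a +
      (((s : ℤ) + 1) * (((range r).filter (fun j => cpt m β (a+j) ∈ A)).card : ℤ) - r) := by
  unfold Vf
  rw [cntIn_add]
  push_cast
  ring

namespace Good

theorem cseg_eq (H : Good m n s A S) {i : ℕ} (hi : i < S.p) {r : ℕ} (hr : r ≤ S.lenB i) :
    ((range r).filter (fun j => cpt m (S.b 0) (Tacc S i + j) ∈ A)).card =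
      (cblock m (S.b i) r ∩ A).card := by
  rw [cblock_inter_card (le_trans hr (H.blk_len hi).1)]
  congr 1
  apply Finset.filter_congr
  intro t _
  rw [H.b_coord hi, cpt_add]

theorem seg_lower (H : Good m n s A S) {i : ℕ} (hi : i < S.p) {r : ℕ} (hr : r ≤ S.lenB i) :
    r ≤ (s+1) * (cblock m (S.b i) r ∩ A).card := by
  rcases Nat.eq_zero_or_pos r with rfl | hr0
  · omega
  rcases Nat.lt_or_ge r (S.lenB i) with hlt | hge
  · have := H.hiv i hi r hr0 hlt
    rw [cblock_card (le_trans (le_of_lt hlt) (H.blk_len hi).1)] at this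
    have h2 : ((r : ℝ)) + 1 ≤ ((s+1) * (cblock m (S.b i) r ∩ A).card : ℕ) := by
      push_cast; push_cast at this; linarith
    have := Nat.cast_le (α := ℝ) |>.mp (by linarith : ((r:ℕ) : ℝ) ≤ (((s+1) * (cblock m (S.b i) r ∩ A).card : ℕ) : ℝ))
    exact this
  · have hreq : r = S.lenB i := by omega
    subst hreq
    have h1 : cblock m (S.b i) (S.lenB i) = S.Blk m i := rfl
    rw [h1, Finset.inter_comm, ← H.blk_card_eq hi, (H.blk_len hi).2]

theorem seg_end (H : Good m n s A S) {i : ℕ} (hi : i < S.p) :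
    (s+1) * (cblock m (S.b i) (S.lenB i) ∩ A).card = S.lenB i := by
  have h1 : cblock m (S.b i) (S.lenB i) = S.Blk m i := rfl
  rw [h1, Finset.inter_comm, ← H.blk_card_eq hi, (H.blk_len hi).2]

theorem gap_not_mem (H : Good m n s A S) {i : ℕ} (hi : i < S.p) {r : ℕ}
    (h1 : S.lenB i ≤ r) (h2 : r < S.lenB i + S.lenG i) :
    cpt m (S.b 0) (Tacc S i + r) ∉ A := by
  have hpt : cpt m (S.b 0) (Tacc S i + r) = cpt m (cpt m (S.b i) (S.lenB i)) (r - S.lenB i) := by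
    rw [cpt_add, ← cpt_add, ← H.b_coord hi]
    congr 1
    omega
  rw [hpt]
  apply H.hgapA i hi
  exact mem_cblock.2 ⟨r - S.lenB i, by omega, rfl⟩

theorem V_blk (H : Good m n s A S) {i : ℕ} (hi : i < S.p) {r : ℕ} (hr : r ≤ S.lenB i) :
    Vf s m A (S.b 0) (Tacc S i) ≤ Vf s m A (S.b 0) (Tacc S i + r) := by
  rw [Vf_window]
  have h1 := H.cseg_eq hi hr
  have h2 := H.seg_lower hi hr
  rw [h1]
  have : (r : ℤ) ≤ ((s:ℤ)+1) * ((cblock m (S.b i) r ∩ A).card : ℤ) := by exact_mod_cast h2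
  omega

theorem V_blk_end (H : Good m n s A S) {i : ℕ} (hi : i < S.p) :
    Vf s m A (S.b 0) (Tacc S i + S.lenB i) = Vf s m A (S.b 0) (Tacc S i) := by
  rw [Vf_window, H.cseg_eq hi (le_refl _)]
  have h2 := H.seg_end hi
  have : ((s:ℤ)+1) * ((cblock m (S.b i) (S.lenB i) ∩ A).card : ℤ) = (S.lenB i : ℤ) := by
    exact_mod_cast h2
  omega

theorem V_gap (H : Good m n s A S) {i : ℕ} (hi : i < S.p) {q : ℕ} (hq : q ≤ S.lenG i) :
    Vf s m A (S.b 0) (Tacc S i + S.lenB i + q) = Vf s m A (S.b 0) (Tacc S i) - q := by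
  induction q with
  | zero => simpa using H.V_blk_end hi
  | succ q ih =>
    have hq' : q ≤ S.lenG i := by omega
    have hnot : cpt m (S.b 0) (Tacc S i + S.lenB i + q) ∉ A := by
      rw [Nat.add_assoc]
      exact H.gap_not_mem hi (by omega) (by omega)
    have hstep := Vf_succ_not s m A (S.b 0) (Tacc S i + S.lenB i + q) hnot
    have : Tacc S i + S.lenB i + (q + 1) = Tacc S i + S.lenB i + q + 1 := by omega
    rw [this, hstep, ih hq']
    push_cast
    ring

theorem coord_lt_m (H : Good m n s A S) {i r : ℕ} (hi : i < S.p)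
    (hr : r < S.lenB i + S.lenG i) : Tacc S i + r < m := by
  have h1 : Tacc S i + r < Tacc S (i+1) := by
    show Tacc S i + r < Tacc S i + (S.lenB i + S.lenG i)
    omega
  have h2 : Tacc S (i+1) ≤ m := H.Tacc_le_m hi
  omega

theorem g_blk (H : Good m n s A S) {i : ℕ} (hi : i < S.p) {r : ℕ} (hr : r ≤ S.lenB i) :
    gcnt S m (Tacc S i + r) = gcnt S m (Tacc S i) := by
  induction r with
  | zero => rfl
  | succ r ih =>
    have hr' : r ≤ S.lenB i := by omega
    have hlt : Tacc S i + r < m :=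
      H.coord_lt_m hi (by have := H.hlenB i hi; omega)
    have hmod : (Tacc S i + r) % m = Tacc S i + r := Nat.mod_eq_of_lt hlt
    have hnot : (Tacc S i + r) % m ∉ gapSet S := by
      rw [hmod]
      intro hmem
      have := (H.mem_gapSet_iff hi (Nat.le_add_right _ _)
        (by show Tacc S i + r < Tacc S i + (S.lenB i + S.lenG i); omega)).1 hmem
      omega
    have : Tacc S i + (r + 1) = (Tacc S i + r) + 1 := by omega
    rw [this, gcnt_succ, if_neg hnot, ih hr']
    omega

theorem g_gap (H : Good m n s A S) {i : ℕ} (hi : i < S.p) {q : ℕ} (hq : q ≤ S.lenG i) :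
    gcnt S m (Tacc S i + S.lenB i + q) = gcnt S m (Tacc S i) + q := by
  induction q with
  | zero => simpa using H.g_blk hi (le_refl _)
  | succ q ih =>
    have hq' : q ≤ S.lenG i := by omega
    have hlt : Tacc S i + S.lenB i + q < m := by
      have := H.coord_lt_m hi (show S.lenB i + q < S.lenB i + S.lenG i by omega)
      omega
    have hmod : (Tacc S i + S.lenB i + q) % m = Tacc S i + S.lenB i + q :=
      Nat.mod_eq_of_lt hlt
    have hmem : (Tacc S i + S.lenB i + q) % m ∈ gapSet S := by
      rw [hmod]
      refine Finset.mem_biUnion.2 ⟨i, Finset.mem_range.2 hi, Finset.mem_Ico.2 ⟨by omega, ?_⟩⟩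
      show Tacc S i + S.lenB i + q < Tacc S i + (S.lenB i + S.lenG i)
      omega
    have : Tacc S i + S.lenB i + (q + 1) = (Tacc S i + S.lenB i + q) + 1 := by omega
    rw [this, gcnt_succ, if_pos hmem, ih hq']
    omega

theorem lap_inv (H : Good m n s A S) : ∀ i ≤ S.p,
    Vf s m A (S.b 0) (Tacc S i) = -(gcnt S m (Tacc S i) : ℤ) := by
  intro i
  induction i with
  | zero =>
    intro _
    show Vf s m A (S.b 0) 0 = -(gcnt S m 0 : ℤ)
    unfold Vf cntIn gcnt
    simp
  | succ i ih =>
    intro hi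
    have hip : i < S.p := by omega
    have h1 : Tacc S (i+1) = Tacc S i + S.lenB i + (S.lenG i) := by
      show Tacc S i + (S.lenB i + S.lenG i) = _; omega
    rw [h1, H.V_gap hip (le_refl _), H.g_gap hip (le_refl _), ih (by omega)]
    push_cast
    ring

theorem S1m (H : Good m n s A S) {u : ℕ} (hu : u ≤ m) :
    -(gcnt S m u : ℤ) ≤ Vf s m A (S.b 0) u := by
  rcases Nat.eq_or_lt_of_le hu with h | hu'
  · have h1 := H.lap_inv S.p (le_refl _)
    rw [H.Tacc_p] at h1
    rw [h]
    exact le_of_eq h1.symm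
  · have hu2 : u < Tacc S S.p := by rw [H.Tacc_p]; exact hu'
    rcases seg_find S S.p u hu2 with ⟨i, hip, h1, h2⟩
    have h2' : u < Tacc S i + (S.lenB i + S.lenG i) := h2
    set r := u - Tacc S i with hrdef
    have hur : u = Tacc S i + r := by omega
    rcases le_or_gt r (S.lenB i) with hrb | hrb
    · calc -(gcnt S m u : ℤ) ≤ -(gcnt S m (Tacc S i) : ℤ) := by
            have := gcnt_mono S m (show Tacc S i ≤ u by omega)
            omega
        _ = Vf s m A (S.b 0) (Tacc S i) := (H.lap_inv i (by omega)).symm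
        _ ≤ Vf s m A (S.b 0) u := by rw [hur]; exact H.V_blk hip hrb
    · set q := r - S.lenB i with hqdef
      have hq : q ≤ S.lenG i := by omega
      have hu3 : u = Tacc S i + S.lenB i + q := by omega
      rw [hu3, H.V_gap hip hq, H.g_gap hip hq, H.lap_inv i (by omega)]
      push_cast
      omega

theorem S2m (H : Good m n s A S) {c : ℕ} (hc : c ∈ gapSet S) :
    c < m ∧ Vf s m A (S.b 0) c = -(gcnt S m c : ℤ) ∧ cpt m (S.b 0) c ∉ A := by
  rcases Finset.mem_biUnion.1 hc with ⟨i, hi, hci⟩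
  rw [Finset.mem_Ico] at hci
  have hip := Finset.mem_range.1 hi
  have h2' : c < Tacc S i + (S.lenB i + S.lenG i) := hci.2
  set q := c - Tacc S i - S.lenB i with hqdef
  have hq : q < S.lenG i := by omega
  have hc2 : c = Tacc S i + S.lenB i + q := by omega
  have hlt : c < m := by
    have := H.coord_lt_m hip (show S.lenB i + q < S.lenB i + S.lenG i by omega)
    omega
  refine ⟨hlt, ?_, ?_⟩
  · rw [hc2, H.V_gap hip (le_of_lt hq), H.g_gap hip (le_of_lt hq), H.lap_inv i (by omega)]
    push_cast
    ring
  · rw [hc2, Nat.add_assoc]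
    exact H.gap_not_mem hip (by omega) (by omega)

theorem chi_per (H : Good m n s A S) (β u : ℕ) : cpt m β (u + m) = cpt m β u :=
  cpt_congr β (Nat.add_mod_right u m)

theorem cnt_m (H : Good m n s A S) (β : ℕ) : cntIn m A β m = n := by
  have h1 := cblock_inter_card (le_refl m) (N := m) (x := β) A
  rw [cblock_full H.hm0] at h1
  rw [Finset.inter_eq_right.2 H.hsub] at h1
  unfold cntIn
  rw [← h1, H.hcA]

theorem cnt_per (H : Good m n s A S) (β : ℕ) : ∀ u, cntIn m A β (u + m) = cntIn m A β u + n := by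
  intro u
  induction u with
  | zero =>
    have : cntIn m A β 0 = 0 := by unfold cntIn; simp
    rw [Nat.zero_add, this, H.cnt_m β, Nat.zero_add]
  | succ u ih =>
    have h1 : u + 1 + m = (u + m) + 1 := by omega
    rw [h1, cntIn_succ, ih, H.chi_per β u, cntIn_succ]
    omega

theorem hmz (H : Good m n s A S) : (m : ℤ) = ((s : ℤ)+1) * n + s := by
  have : m = (s+1) * n + s := by rw [H.hm]; ring
  exact_mod_cast this

theorem V_per (H : Good m n s A S) (β : ℕ) (u : ℕ) :
    Vf s m A β (u + m) = Vf s m A β u - s := by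
  unfold Vf
  rw [H.cnt_per β u]
  have := H.hmz
  push_cast
  push_cast at this
  linarith

theorem g_m (H : Good m n s A S) : gcnt S m m = s := by
  have h1 := H.lap_inv S.p (le_refl _)
  rw [H.Tacc_p] at h1
  have h2 : Vf s m A (S.b 0) (0 + m) = Vf s m A (S.b 0) 0 - s := H.V_per (S.b 0) 0
  have h3 : Vf s m A (S.b 0) 0 = 0 := by unfold Vf cntIn; simp
  rw [Nat.zero_add, h3] at h2
  rw [h2] at h1
  omega

theorem g_per (H : Good m n s A S) : ∀ u, gcnt S m (u + m) = gcnt S m u + s := by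
  intro u
  induction u with
  | zero =>
    have : gcnt S m 0 = 0 := by unfold gcnt; simp
    rw [Nat.zero_add, this, H.g_m, Nat.zero_add]
  | succ u ih =>
    have h1 : u + 1 + m = (u + m) + 1 := by omega
    rw [h1, gcnt_succ, ih, gcnt_succ, Nat.add_mod_right]
    omega

theorem V_laps (H : Good m n s A S) (β : ℕ) : ∀ q r,
    Vf s m A β (r + q * m) = Vf s m A β r - q * s := by
  intro q
  induction q with
  | zero => intro r; simp
  | succ q ih =>
    intro r
    have h1 : r + (q+1) * m = (r + q * m) + m := by ring
    rw [h1, H.V_per β, ih r]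
    push_cast
    ring

theorem g_laps (H : Good m n s A S) : ∀ q r,
    gcnt S m (r + q * m) = gcnt S m r + q * s := by
  intro q
  induction q with
  | zero => intro r; simp
  | succ q ih =>
    intro r
    have h1 : r + (q+1) * m = (r + q * m) + m := by ring
    rw [h1, H.g_per, ih r]
    ring

theorem S1 (H : Good m n s A S) (u : ℕ) :
    -(gcnt S m u : ℤ) ≤ Vf s m A (S.b 0) u := by
  have hd : u = u % m + (u / m) * m := by
    rw [Nat.mod_add_div']
  rw [hd, H.V_laps (S.b 0) (u/m) (u%m), H.g_laps (u/m) (u%m)]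
  have h1 := H.S1m (le_of_lt (Nat.mod_lt u H.hm0))
  push_cast
  push_cast at h1
  linarith

theorem S2 (H : Good m n s A S) {c : ℕ} (hc : c % m ∈ gapSet S) :
    Vf s m A (S.b 0) (c+1) = -(gcnt S m (c+1) : ℤ) ∧ Vf s m A (S.b 0) c = -(gcnt S m c : ℤ) := by
  set r := c % m with hrdef
  set q := c / m with hqdef
  have hd : c = r + q * m := by rw [hrdef, hqdef, Nat.mod_add_div']
  obtain ⟨hrm, hV, hchi⟩ := H.S2m hc
  have hd1 : c + 1 = (r + 1) + q * m := by omega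
  have hVr1 : Vf s m A (S.b 0) (r+1) = Vf s m A (S.b 0) r - 1 := Vf_succ_not s m A _ r hchi
  have hgr1 : gcnt S m (r+1) = gcnt S m r + 1 := by
    rw [gcnt_succ, if_pos (by rw [Nat.mod_eq_of_lt hrm]; exact hc)]
  constructor
  · rw [hd1, H.V_laps (S.b 0) q (r+1), H.g_laps q (r+1), hVr1, hgr1, hV]
    push_cast
    ring
  · rw [hd, H.V_laps (S.b 0) q r, H.g_laps q r, hV]
    push_cast
    ring

theorem gap_link (H : Good m n s A S) {z : ℕ} (hz : z ∈ S.gapsUnion m) :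
    ∃ c, c ∈ gapSet S ∧ c < m ∧ cpt m (S.b 0) c = z := by
  rcases Finset.mem_biUnion.1 hz with ⟨i, hi, hzi⟩
  have hip := Finset.mem_range.1 hi
  rcases mem_cblock.1 hzi with ⟨r, hr, hzr⟩
  refine ⟨Tacc S i + S.lenB i + r, ?_, ?_, ?_⟩
  · refine Finset.mem_biUnion.2 ⟨i, hi, Finset.mem_Ico.2 ⟨by omega, ?_⟩⟩
    show Tacc S i + S.lenB i + r < Tacc S i + (S.lenB i + S.lenG i)
    omega
  · have := H.coord_lt_m hip (show S.lenB i + r < S.lenB i + S.lenG i by omega)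
    omega
  · rw [← hzr, Nat.add_assoc, ← cpt_add, ← H.b_coord hip, ← cpt_add]

/-- card of an arc intersect A via cnt differences. -/
theorem arc_count (H : Good m n s A S) {y a L : ℕ} (ha : cpt m (S.b 0) a = y)
    (hLm : L ≤ m) :
    cntIn m A (S.b 0) (a + L) = cntIn m A (S.b 0) a + (cblock m y L ∩ A).card := by
  rw [cntIn_add, cblock_inter_card hLm A]
  congr 2
  apply Finset.filter_congr
  intro t _
  rw [← ha, cpt_add]

/-- Arc starting at a gap point of the structure and ending in `A` has density ≥ 1/(s+1). -/
theorem arcB (H : Good m n s A S) {y L : ℕ} (hy : y ∈ S.gapsUnion m)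
    (hL1 : 1 ≤ L) (hLm : L ≤ m) (hend : cpt m y (L-1) ∈ A) :
    L ≤ (s+1) * ((cblock m y L ∩ A).card) := by
  rcases H.gap_link hy with ⟨c, hcg, hcm, hcy⟩
  set e := c + L - 1 with hedef
  have he1 : e + 1 = c + L := by omega
  have hchie : cpt m (S.b 0) e ∈ A := by
    have : e = c + (L - 1) := by omega
    rw [this, ← cpt_add, hcy]
    exact hend
  have hVe : Vf s m A (S.b 0) (e+1) = Vf s m A (S.b 0) e + s := Vf_succ_mem s m A _ e hchie
  have hS1 := H.S1 e
  have hgmono : gcnt S m e ≤ gcnt S m c + s := by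
    have h1 : e ≤ c + m := by omega
    have h2 := gcnt_mono S m h1
    rw [H.g_per c] at h2
    exact h2
  have hVc : Vf s m A (S.b 0) c = -(gcnt S m c : ℤ) := (H.S2m hcg).2.1
  have hineq : Vf s m A (S.b 0) c ≤ Vf s m A (S.b 0) (c + L) := by
    rw [← he1, hVe, hVc]
    have : -(gcnt S m e : ℤ) ≤ Vf s m A (S.b 0) e := hS1
    push_cast at *
    omega
  have hcount := H.arc_count hcy hLm
  have hwin := Vf_window s m A (S.b 0) c L
  unfold Vf at hineq
  rw [hcount] at hineq
  have : (L : ℤ) ≤ ((s:ℤ)+1) * ((cblock m y L ∩ A).card : ℤ) := by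
    push_cast at hineq
    nlinarith [hineq]
  exact_mod_cast this

/-- Arc ending at a gap point of the structure has density < 1/(s+1). -/
theorem arcG (H : Good m n s A S) {z y L : ℕ} (hz : z ∈ S.gapsUnion m)
    (hy : y ∈ Icc 1 m) (hL1 : 1 ≤ L) (hLm : L ≤ m) (hend : cpt m y (L-1) = z) :
    (s+1) * ((cblock m y L ∩ A).card) + 1 ≤ L := by
  rcases exists_coord H.hm0 (S.b 0) hy with ⟨a, ham, hay⟩
  set e := a + L - 1 with hedef
  have he1 : e + 1 = a + L := by omega
  rcases H.gap_link hz with ⟨c, hcg, hcm, hcz⟩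
  have hec : cpt m (S.b 0) e = cpt m (S.b 0) c := by
    have : e = a + (L-1) := by omega
    rw [this, ← cpt_add, hay, hend, hcz]
  have hmod : e % m ∈ gapSet S := by
    have := cpt_mod_eq hec
    rw [Nat.mod_eq_of_lt hcm] at this
    rw [this]
    exact hcg
  obtain ⟨hVe1, hVee⟩ := H.S2 hmod
  have hge : gcnt S m a ≤ gcnt S m e := gcnt_mono S m (by omega)
  have hS1a := H.S1 a
  have hgsucc : gcnt S m (e+1) = gcnt S m e + 1 := by
    rw [gcnt_succ, if_pos hmod]
  have hineq : Vf s m A (S.b 0) (a + L) ≤ Vf s m A (S.b 0) a - 1 := by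
    rw [← he1, hVe1, hgsucc]
    push_cast at *
    omega
  have hcount := H.arc_count hay hLm
  unfold Vf at hineq
  rw [hcount] at hineq
  have : ((s:ℤ)+1) * ((cblock m y L ∩ A).card : ℤ) + 1 ≤ (L : ℤ) := by
    push_cast at hineq
    nlinarith [hineq]
  exact_mod_cast this

end Good

/-- rank double counting for an injective score -/
theorem sumrank {E : Finset ℕ} {f : ℕ → ℕ}
    (hinj : ∀ z1 ∈ E, ∀ z2 ∈ E, f z1 = f z2 → z1 = z2) :
    2 * ∑ x ∈ E, (E.filter (fun z => f z ≤ f x)).card = E.card * E.card + E.card := by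
  have e1 : ∑ x ∈ E, (E.filter (fun z => f z ≤ f x)).card
      = ∑ x ∈ E, ∑ z ∈ E, (if f z ≤ f x then 1 else 0) := by
    apply Finset.sum_congr rfl
    intro x _
    rw [Finset.card_filter]
  have e2 : ∑ x ∈ E, ∑ z ∈ E, (if f z ≤ f x then (1:ℕ) else 0)
      = ∑ x ∈ E, ∑ z ∈ E, (if f x ≤ f z then (1:ℕ) else 0) := Finset.sum_comm
  rw [two_mul, e1]
  nth_rewrite 2 [e2]
  rw [← Finset.sum_add_distrib]
  have e3 : ∀ x ∈ E, (∑ z ∈ E, (if f z ≤ f x then (1:ℕ) else 0))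
      + (∑ z ∈ E, (if f x ≤ f z then (1:ℕ) else 0)) = E.card + 1 := by
    intro x hx
    rw [← Finset.sum_add_distrib]
    have : ∀ z ∈ E, ((if f z ≤ f x then (1:ℕ) else 0) + (if f x ≤ f z then (1:ℕ) else 0))
        = 1 + (if z = x then 1 else 0) := by
      intro z hz
      by_cases hzx : z = x
      · subst hzx; simp
      · have hfne : f z ≠ f x := fun h => hzx (hinj z hz x hx h)
        rcases le_or_gt (f z) (f x) with h | h
        · rw [if_pos h, if_neg (by omega), if_neg hzx]
        · rw [if_neg (by omega), if_pos (by omega), if_neg hzx]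
    rw [Finset.sum_congr rfl this, Finset.sum_add_distrib, Finset.sum_const, Finset.sum_ite_eq' E x (fun _ => 1), if_pos hx]
    simp [Nat.add_comm]
  rw [Finset.sum_congr rfl e3, Finset.sum_const, smul_eq_mul]
  ring

namespace Good

theorem main2 {m n s : ℕ} {A A' : Finset ℕ} {S S' : CircData}
    (H : Good m n s A S) (H' : Good m n s A' S') (hne : A ≠ A')
    (C : Finset ℕ) (h1 : A ⊆ C) (h2 : C ⊆ fdelta A S m) (h3 : A' ⊆ C)
    (h4 : C ⊆ fdelta A' S' m) : False := by
  classical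
  set D := A \ A' with hD
  set D' := A' \ A with hD'
  have hm0 := H.hm0
  have hDG' : D ⊆ S'.gapsUnion m := by
    intro x hx
    rw [hD, Finset.mem_sdiff] at hx
    have := h4 (h1 hx.1)
    unfold fdelta at this
    rcases Finset.mem_union.1 this with h | h
    · exact absurd h hx.2
    · exact h
  have hD'G : D' ⊆ S.gapsUnion m := by
    intro x hx
    rw [hD', Finset.mem_sdiff] at hx
    have := h2 (h3 hx.1)
    unfold fdelta at this
    rcases Finset.mem_union.1 this with h | h
    · exact absurd h hx.2
    · exact h
  set k := D.card with hk
  have hkk : D'.card = k := by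
    rw [hk, hD, hD']
    exact (Finset.card_sdiff_comm (H.hcA.trans H'.hcA.symm)).symm
  have hk1 : 0 < k := by
    rcases Nat.eq_zero_or_pos k with h | h
    · exfalso
      have hDe : D = ∅ := Finset.card_eq_zero.1 (hk ▸ h)
      have hsub : A ⊆ A' := by
        intro x hx
        by_contra hx'
        have : x ∈ D := by rw [hD, Finset.mem_sdiff]; exact ⟨hx, hx'⟩
        rw [hDe] at this
        exact absurd this (Finset.notMem_empty x)
      exact hne (Finset.eq_of_subset_of_card_le hsub (le_of_eq (H'.hcA.trans H.hcA.symm)))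
    · exact h
  have hDIcc : D ⊆ Icc 1 m := fun x hx => H.hsub (Finset.mem_sdiff.1 hx).1
  have hD'Icc : D' ⊆ Icc 1 m := fun x hx => H'.hsub (Finset.mem_sdiff.1 hx).1
  -- the key pairwise inequality
  have key : ∀ x ∈ D, ∀ y ∈ D',
      (D'.filter (fun z => cdist m y z ≤ cdist m y x)).card + 1 ≤
        (D.filter (fun z => cdist m y z ≤ cdist m y x)).card := by
    intro x hx y hy
    have hxIcc : x ∈ Icc 1 m := hDIcc hx
    have hyIcc : y ∈ Icc 1 m := hD'Icc hy
    set L := cdist m y x + 1 with hL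
    have hL1 : 1 ≤ L := by omega
    have hLm : L ≤ m := by have := cdist_lt hm0 y x; omega
    have hend : cpt m y (L-1) = x := by
      rw [hL, Nat.add_sub_cancel]
      exact cpt_cdist hyIcc hxIcc
    have hxA : x ∈ A := (Finset.mem_sdiff.1 hx).1
    have hB := H.arcB (hD'G hy) hL1 hLm (by rw [hend]; exact hxA)
    have hG := H'.arcG (hDG' hx) hyIcc hL1 hLm hend
    set P := cblock m y L with hP
    have hlt : (P ∩ A').card < (P ∩ A).card := by
      by_contra hcon
      push_neg at hcon
      have := Nat.mul_le_mul_left (s+1) hcon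
      omega
    have hsplitA : (P ∩ A).card = (P ∩ (A ∩ A')).card + (P ∩ D).card := by
      rw [← Finset.card_union_of_disjoint]
      · congr 1
        ext z
        simp only [Finset.mem_union, Finset.mem_inter, Finset.mem_sdiff, hD]
        tauto
      · rw [Finset.disjoint_left]
        intro z hz hz'
        simp only [Finset.mem_inter, Finset.mem_sdiff, hD] at hz hz'
        tauto
    have hsplitA' : (P ∩ A').card = (P ∩ (A ∩ A')).card + (P ∩ D').card := by
      rw [← Finset.card_union_of_disjoint]
      · congr 1
        ext z
        simp only [Finset.mem_union, Finset.mem_inter, Finset.mem_sdiff, hD']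
        tauto
      · rw [Finset.disjoint_left]
        intro z hz hz'
        simp only [Finset.mem_inter, Finset.mem_sdiff, hD'] at hz hz'
        tauto
    have hfD : P ∩ D = D.filter (fun z => cdist m y z ≤ cdist m y x) := by
      ext z
      simp only [Finset.mem_inter, Finset.mem_filter]
      constructor
      · rintro ⟨hzP, hzD⟩
        exact ⟨hzD, (mem_arc hyIcc hxIcc (hDIcc hzD)).1 hzP⟩
      · rintro ⟨hzD, hzc⟩
        exact ⟨(mem_arc hyIcc hxIcc (hDIcc hzD)).2 hzc, hzD⟩
    have hfD' : P ∩ D' = D'.filter (fun z => cdist m y z ≤ cdist m y x) := by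
      ext z
      simp only [Finset.mem_inter, Finset.mem_filter]
      constructor
      · rintro ⟨hzP, hzD⟩
        exact ⟨hzD, (mem_arc hyIcc hxIcc (hD'Icc hzD)).1 hzP⟩
      · rintro ⟨hzD, hzc⟩
        exact ⟨(mem_arc hyIcc hxIcc (hD'Icc hzD)).2 hzc, hzD⟩
    rw [← hfD, ← hfD']
    omega
  -- sum the inequality over all pairs
  set S1 := ∑ y ∈ D', ∑ x ∈ D, (D.filter (fun z => cdist m y z ≤ cdist m y x)).card with hS1
  set S2 := ∑ y ∈ D', ∑ x ∈ D, (D'.filter (fun z => cdist m y z ≤ cdist m y x)).card with hS2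
  have hsum : S2 + k * k ≤ S1 := by
    have h0 : ∀ y ∈ D', (∑ x ∈ D, (D'.filter (fun z => cdist m y z ≤ cdist m y x)).card) + k ≤
        ∑ x ∈ D, (D.filter (fun z => cdist m y z ≤ cdist m y x)).card := by
      intro y hy
      have h := Finset.sum_le_sum (fun x hx => key x hx y hy)
      rwa [Finset.sum_add_distrib, Finset.sum_const, smul_eq_mul, mul_one, ← hk] at h
    have h1 := Finset.sum_le_sum h0
    rwa [Finset.sum_add_distrib, Finset.sum_const, smul_eq_mul, hkk, ← hS1, ← hS2] at h1
  have h2S1 : 2 * S1 = k * (k * k + k) := by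
    rw [hS1, Finset.mul_sum]
    have e : ∀ y ∈ D', 2 * ∑ x ∈ D, (D.filter (fun z => cdist m y z ≤ cdist m y x)).card
        = k * k + k := by
      intro y hy
      rw [sumrank (fun z1 hz1 z2 hz2 h => cdist_inj (hD'Icc hy) (hDIcc hz1) (hDIcc hz2) h), hk]
    rw [Finset.sum_congr rfl e, Finset.sum_const, smul_eq_mul, hkk]
  have h2S2 : 2 * S2 = k * (k * k + k) := by
    have e0 : S2 = ∑ x ∈ D, ∑ y ∈ D', (D'.filter (fun z => cdist m z x ≤ cdist m y x)).card := by
      rw [hS2, Finset.sum_comm]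
      apply Finset.sum_congr rfl
      intro x hx
      apply Finset.sum_congr rfl
      intro y hy
      congr 1
      apply Finset.filter_congr
      intro z hz
      have := cdist_comparison (hD'Icc hy) (hD'Icc hz) (hDIcc hx)
      simp only [this]
    rw [e0, Finset.mul_sum]
    have e : ∀ x ∈ D, 2 * ∑ y ∈ D', (D'.filter (fun z => cdist m z x ≤ cdist m y x)).card
        = k * k + k := by
      intro x hx
      have hinj : ∀ z1 ∈ D', ∀ z2 ∈ D', cdist m z1 x = cdist m z2 x → z1 = z2 := by
        intro z1 hz1 z2 hz2 h
        have hne1 : x ≠ z1 := by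
          intro hxz; subst hxz
          exact (Finset.mem_sdiff.1 hz1).2 (Finset.mem_sdiff.1 hx).1
        have hne2 : x ≠ z2 := by
          intro hxz; subst hxz
          exact (Finset.mem_sdiff.1 hz2).2 (Finset.mem_sdiff.1 hx).1
        have h1 := cdist_swap (hD'Icc hz1) (hDIcc hx) hne1
        have h2 := cdist_swap (hD'Icc hz2) (hDIcc hx) hne2
        have : cdist m x z1 = cdist m x z2 := by omega
        exact cdist_inj (hDIcc hx) (hD'Icc hz1) (hD'Icc hz2) this
      rw [sumrank hinj, hkk]
    rw [Finset.sum_congr rfl e, Finset.sum_const, smul_eq_mul, ← hk]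
  have hS12 : S1 = S2 := by omega
  have hge : 1 ≤ k * k := by
    calc 1 = 1 * 1 := by ring
    _ ≤ k * k := Nat.mul_le_mul hk1 hk1
  have hcontr : S2 + 1 ≤ S2 := by
    calc S2 + 1 ≤ S2 + k * k := Nat.add_le_add_left hge S2
    _ ≤ S1 := hsum
    _ = S2 := hS12
  omega

end Good

end CK


/-- Corollary 3.2 of the paper. Let `d ≥ 1`, `l ≥ 0`, `d + l ≤ n`,
`1 ≤ s ≤ ⌊(n−d−l)/(d+l+1)⌋` and `m = (n+1)s + n`. Then every `n`-subset `A ⊆ [m]`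
satisfies `|f_{s+1}(A)| = n + s`, and for distinct `n`-subsets `A, A' ⊆ [m]` the
intervals `[A, f_{s+1}(A)]` and `[A', f_{s+1}(A')]` are disjoint. -/
theorem card_and_disjoint_on_m (d l n s m : ℕ) (hd : 1 ≤ d) (hdl : d + l ≤ n)
    (hs1 : 1 ≤ s) (hs2 : s ≤ (n - d - l) / (d + l + 1))
    (hm : m = (n + 1) * s + n) :
    (∀ A : Finset ℕ, A ⊆ Finset.Icc 1 m → A.card = n →
      ∀ S : CircData, IsBlockStructure m A ((s : ℝ) + 1) S →
        (fdelta A S m).card = n + s) ∧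
    (∀ A A' : Finset ℕ, A ⊆ Finset.Icc 1 m → A' ⊆ Finset.Icc 1 m →
      A.card = n → A'.card = n → A ≠ A' →
      ∀ S S' : CircData, IsBlockStructure m A ((s : ℝ) + 1) S →
        IsBlockStructure m A' ((s : ℝ) + 1) S' →
        ∀ C : Finset ℕ,
          ¬(A ⊆ C ∧ C ⊆ fdelta A S m ∧ A' ⊆ C ∧ C ⊆ fdelta A' S' m)) := by
  have hn : 1 ≤ n := by omega
  constructor
  · intro A hA hcard S hS
    exact CK.Good.part1 ⟨hS, hA, hcard, hm, hs1, hn⟩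
  · intro A A' hA hA' hcA hcA' hne S S' hS hS' C hcon
    obtain ⟨h1, h2, h3, h4⟩ := hcon
    exact CK.Good.main2 ⟨hS, hA, hcA, hm, hs1, hn⟩ ⟨hS', hA', hcA', hm, hs1, hn⟩ hne C h1 h2 h3 h4
end
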